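/- arXiv:1012.3062 — 7 statements merged into one kernel-verified Lean document; each statement's English description precedes it below -/
import Mathlib

section
/- For every prime p > P(m) and every integer n ≥ 1, a(m·pⁿ) = b(p)·a(m·p^{n−1}) − χ(p)·p^{k−1}·a(m·p^{n−2}), where a(m·p^{−1}) is interpreted as 0 when n = 1. -/
/-!
Fix `p > P(m)`. Then `p ∤ m`: otherwise `m > P(m)`, and the defining inequality of `P(m)` at
`n = m` fails because `m^{k-1} ≤ A(m)³`. Hence `ord_p(m pⁿ⁻¹) = n - 1`, and the
Atkin–Swinnerton-Dyer congruence at `m pⁿ⁻¹` says that `p^{(k-1)n}` divides the defect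
`a(m pⁿ) - b(p) a(m pⁿ⁻¹) + χ(p) p^{k-1} a(m pⁿ⁻²)`. With `q = p^{k/2-1/5}`, the coefficient
bounds make each of its three terms at most `C² A(m) qⁿ` (the last one because `p^{k-1} ≤ q²`),
so the defect is smaller than `3 C² A(m)² qⁿ`, which by the choice of `P(m)` is smaller than
`(pⁿ)^{k-1}`. A multiple of `p^{(k-1)n}` that small vanishes.
-/

open Real

def heckeDefect (k : ℕ) (a b χ : ℕ → ℤ) (p m n : ℕ) : ℤ :=
  a (m * p ^ n) - b p * a (m * p ^ (n - 1)) +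
    χ p * (p : ℤ) ^ (k - 1) * (if 2 ≤ n then a (m * p ^ (n - 2)) else 0)

def ASDCongruenceAt (k : ℕ) (a b χ : ℕ → ℤ) (p : ℕ) : Prop :=
  ∀ n : ℕ, 1 ≤ n → ((p : ℤ) ^ ((k - 1) * (1 + padicValNat p n))) ∣
    (a (n * p) - b p * a n + χ p * (p : ℤ) ^ (k - 1) * (if p ∣ n then a (n / p) else 0))

section Divisibility

variable {p m : ℕ}

lemma padicValNat_mul_pow_of_not_dvd [Fact p.Prime] (hm : m ≠ 0) (hpm : ¬p ∣ m) (j : ℕ) :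
    padicValNat p (m * p ^ j) = j := by
  rw [padicValNat.mul hm (pow_ne_zero _ (Fact.out : p.Prime).ne_zero),
    padicValNat.eq_zero_of_not_dvd hpm, padicValNat.prime_pow, zero_add]

lemma ite_dvd_mul_pow_pred {α : Type*} [Zero α] (f : ℕ → α) (hp : 0 < p) (hpm : ¬p ∣ m)
    {n : ℕ} (hn : 1 ≤ n) :
    (if p ∣ m * p ^ (n - 1) then f (m * p ^ (n - 1) / p) else 0) =
      if 2 ≤ n then f (m * p ^ (n - 2)) else 0 := by
  obtain rfl | ⟨j, rfl⟩ : n = 1 ∨ ∃ j, n = j + 2 :=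
    (Nat.lt_or_ge n 2).imp (by omega) fun h => ⟨n - 2, by omega⟩
  · simp [hpm]
  · have hdvd : p ∣ m * p ^ (j + 1) := dvd_mul_of_dvd_right (dvd_pow_self p j.succ_ne_zero) m
    rw [show j + 2 - 1 = j + 1 by omega, show j + 2 - 2 = j by omega, if_pos hdvd,
      if_pos (by omega), pow_succ, ← mul_assoc, Nat.mul_div_cancel _ hp]

lemma pow_dvd_heckeDefect {k : ℕ} {a b χ : ℕ → ℤ} (hp : p.Prime)
    (hASD : ASDCongruenceAt k a b χ p) (hm : m ≠ 0) (hpm : ¬p ∣ m) {n : ℕ} (hn : 1 ≤ n) :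
    (p : ℤ) ^ ((k - 1) * n) ∣ heckeDefect k a b χ p m n := by
  have : Fact p.Prime := ⟨hp⟩
  have key := hASD (m * p ^ (n - 1)) (Nat.one_le_iff_ne_zero.mpr
    (mul_ne_zero hm (pow_ne_zero _ hp.ne_zero)))
  rwa [padicValNat_mul_pow_of_not_dvd hm hpm, ite_dvd_mul_pow_pred _ hp.pos hpm hn,
    mul_assoc, ← pow_succ, Nat.sub_add_cancel hn, Nat.add_sub_cancel' hn] at key

end Divisibility

lemma rpow_le_three_mul_sq_mul_rpow {x C α β : ℝ} (hx : 1 ≤ x) (hC : 1 ≤ C) (hβ : β ≤ 3 * α) :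
    x ^ β ≤ 3 * C ^ 2 * (x ^ α) ^ 2 * x ^ α := by
  have hxα : 0 ≤ x ^ α := rpow_nonneg (by linarith) α
  calc x ^ β ≤ x ^ (3 * α) := rpow_le_rpow_of_exponent_le hx hβ
    _ = 1 * ((x ^ α) ^ 2 * x ^ α) := by
        rw [mul_comm, rpow_mul (by linarith), rpow_ofNat]; ring
    _ ≤ 3 * C ^ 2 * ((x ^ α) ^ 2 * x ^ α) := by gcongr; nlinarith
    _ = 3 * C ^ 2 * (x ^ α) ^ 2 * x ^ α := by ring

lemma abs_apply_mul_pow_lt {f : ℕ → ℤ} {C α : ℝ}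
    (hf : ∀ n : ℕ, 1 ≤ n → |(f n : ℝ)| < C * (n : ℝ) ^ α) {m p : ℕ} (hm : 1 ≤ m) (hp : 0 < p)
    (j : ℕ) : |(f (m * p ^ j) : ℝ)| < C * (m : ℝ) ^ α * ((p : ℝ) ^ α) ^ j := by
  have h := hf (m * p ^ j) (Nat.one_le_iff_ne_zero.mpr (by positivity))
  rwa [Nat.cast_mul, Nat.cast_pow, mul_rpow (by positivity) (by positivity),
    ← rpow_pow_comm (by positivity), ← mul_assoc] at h

lemma abs_sub_mul_add_mul_mul_lt {u v w β χ r q C B : ℝ} (hC : 0 ≤ C) (hu : |u| < B)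
    (hβ : |β| ≤ C * q) (hv : |v| * q ≤ B) (hχ : |χ| ≤ 1) (hr : |r| ≤ q ^ 2)
    (hw : |w| * q ^ 2 ≤ B) :
    |u - β * v + χ * r * w| < (2 + C) * B := by
  have hβv : |β * v| ≤ C * B := by
    rw [abs_mul]
    calc |β| * |v| ≤ C * q * |v| := by gcongr
      _ = C * (|v| * q) := by ring
      _ ≤ C * B := by gcongr
  have hχrw : |χ * r * w| ≤ B := by
    rw [abs_mul, abs_mul]
    calc |χ| * |r| * |w| ≤ 1 * q ^ 2 * |w| := by gcongr
      _ ≤ B := by linarith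
  calc |u - β * v + χ * r * w| ≤ |u| + |β * v| + |χ * r * w| :=
        (abs_add_le _ _).trans (by gcongr; exact abs_sub _ _)
    _ < (2 + C) * B := by linarith

lemma two_add_mul_le_three_mul_sq {C A Q : ℝ} (hC : 1 ≤ C) (hA : 1 ≤ A) (hQ : 0 ≤ Q) :
    (2 + C) * (C * A * Q) ≤ 3 * C ^ 2 * A ^ 2 * Q := by
  have hCA : 2 + C ≤ 3 * C * A := by nlinarith
  have hCAQ : 0 ≤ C * A * Q := by positivity
  nlinarith

lemma abs_heckeDefect_lt {k : ℕ} {a b χ : ℕ → ℤ} {C α : ℝ} (hC : 0 ≤ C)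
    (ha : ∀ n : ℕ, 1 ≤ n → |(a n : ℝ)| < C * (n : ℝ) ^ α)
    (hb : ∀ n : ℕ, 1 ≤ n → |(b n : ℝ)| < C * (n : ℝ) ^ α)
    (hkα : ((k - 1 : ℕ) : ℝ) ≤ 2 * α) {p m n : ℕ} (hp : 1 ≤ p) (hχ : |(χ p : ℝ)| ≤ 1)
    (hm : 1 ≤ m) (hn : 1 ≤ n) :
    |(heckeDefect k a b χ p m n : ℝ)| < (2 + C) * (C * (m : ℝ) ^ α * ((p : ℝ) ^ α) ^ n) := by
  set q := (p : ℝ) ^ α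
  have hp' : (1 : ℝ) ≤ p := by exact_mod_cast hp
  have hq : 0 ≤ q := by positivity
  have hcoeff := abs_apply_mul_pow_lt ha hm hp
  unfold heckeDefect
  push_cast
  refine abs_sub_mul_add_mul_mul_lt hC (hcoeff n) (hb p hp).le ?_ hχ ?_ ?_
  · calc |(a (m * p ^ (n - 1)) : ℝ)| * q ≤ C * m ^ α * q ^ (n - 1) * q := by
          gcongr; exact (hcoeff _).le
      _ = C * m ^ α * q ^ n := by rw [mul_assoc, ← pow_succ, Nat.sub_add_cancel hn]
  · rw [abs_of_nonneg (by positivity), ← rpow_natCast, ← rpow_mul_natCast (by positivity)]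
    exact rpow_le_rpow_of_exponent_le hp' (by push_cast; linarith)
  · split_ifs with h2
    · calc |(a (m * p ^ (n - 2)) : ℝ)| * q ^ 2 ≤ C * m ^ α * q ^ (n - 2) * q ^ 2 := by
            gcongr; exact (hcoeff _).le
        _ = C * m ^ α * q ^ n := by rw [mul_assoc, ← pow_add, Nat.sub_add_cancel h2]
    · simp only [abs_zero, zero_mul]
      positivity

theorem coefficient_recursion_at_large_primes_general
    (k : ℕ) (hk : 2 ≤ k)
    (a b χ : ℕ → ℤ)
    (hχ : ∀ n : ℕ, χ n = -1 ∨ χ n = 0 ∨ χ n = 1)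
    (C : ℝ) (hC : 1 < C)
    (ha : ∀ n : ℕ, 1 ≤ n → |((a n : ℝ))| < C * (n : ℝ) ^ ((k : ℝ) / 2 - 1 / 5))
    (hb : ∀ n : ℕ, 1 ≤ n → |((b n : ℝ))| < C * (n : ℝ) ^ ((k : ℝ) / 2 - 1 / 5))
    (N₁ : ℕ)
    (hASD : ∀ p : ℕ, p.Prime → N₁ < p → ∀ n : ℕ, 1 ≤ n →
      ((p : ℤ) ^ ((k - 1) * (1 + padicValNat p n))) ∣
        (a (n * p) - b p * a n +
          χ p * (p : ℤ) ^ (k - 1) * (if p ∣ n then a (n / p) else 0)))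
    (m : ℕ) (hm : 1 ≤ m)
    (P : ℕ) (hPN : N₁ < P)
    (hP : ∀ n : ℕ, P < n →
      3 * C ^ 2 * ((m : ℝ) ^ ((k : ℝ) / 2 - 1 / 5)) ^ 2 * (n : ℝ) ^ ((k : ℝ) / 2 - 1 / 5)
        < (n : ℝ) ^ ((k : ℝ) - 1))
    :
    ∀ p : ℕ, p.Prime → P < p → ∀ n : ℕ, 1 ≤ n →
      a (m * p ^ n) = b p * a (m * p ^ (n - 1)) -
        χ p * (p : ℤ) ^ (k - 1) * (if 2 ≤ n then a (m * p ^ (n - 2)) else 0) := by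
  set α : ℝ := (k : ℝ) / 2 - 1 / 5 with hα
  have hk2 : (2 : ℝ) ≤ k := by exact_mod_cast hk
  have hk1 : 1 ≤ k := by omega
  have hkα : ((k - 1 : ℕ) : ℝ) = (k : ℝ) - 1 := by push_cast [hk1]; ring
  have hmP : m ≤ P := by
    by_contra! h
    exact (hP m h).not_ge (rpow_le_three_mul_sq_mul_rpow (by exact_mod_cast hm) hC.le
      (by linarith))
  intro p hp hpP n hn
  have hpm : ¬p ∣ m := fun h => by have := Nat.le_of_dvd hm h; omega
  have hdvd := pow_dvd_heckeDefect hp (hASD p hp (by omega)) (by omega) hpm hn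
  have hχp : |(χ p : ℝ)| ≤ 1 := by rcases hχ p with h | h | h <;> simp [h]
  have hsmall := abs_heckeDefect_lt (by positivity) ha hb (by rw [hkα, hα]; linarith)
    hp.one_lt.le hχp hm hn
  have hlarge := hP (p ^ n) (hpP.trans_le (Nat.le_self_pow (by omega) p))
  have hbound : |heckeDefect k a b χ p m n| < (p : ℤ) ^ ((k - 1) * n) := by
    have hA : 1 ≤ (m : ℝ) ^ α := one_le_rpow (by exact_mod_cast hm) (by rw [hα]; linarith)
    rw [Nat.cast_pow, ← rpow_pow_comm (by positivity), ← hkα, rpow_natCast, ← pow_mul,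
      mul_comm n] at hlarge
    exact_mod_cast (hsmall.trans_le
      (two_add_mul_le_three_mul_sq hC.le hA (by positivity))).trans hlarge
  have := Int.eq_zero_of_abs_lt_dvd hdvd hbound
  unfold heckeDefect at this
  linarith

theorem coefficient_recursion_at_large_primes
    (k : ℕ) (hk : 2 ≤ k)
    (a b χ : ℕ → ℤ)
    (hχ : ∀ n : ℕ, χ n = -1 ∨ χ n = 0 ∨ χ n = 1)
    (C : ℝ) (hC : 1 < C)
    (ha : ∀ n : ℕ, 1 ≤ n → |((a n : ℝ))| < C * (n : ℝ) ^ ((k : ℝ) / 2 - 1 / 5))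
    (hb : ∀ n : ℕ, 1 ≤ n → |((b n : ℝ))| < C * (n : ℝ) ^ ((k : ℝ) / 2 - 1 / 5))
    (N₁ : ℕ)
    (hASD : ∀ p : ℕ, p.Prime → N₁ < p → ∀ n : ℕ, 1 ≤ n →
      ((p : ℤ) ^ ((k - 1) * (1 + padicValNat p n))) ∣
        (a (n * p) - b p * a n +
          χ p * (p : ℤ) ^ (k - 1) * (if p ∣ n then a (n / p) else 0)))
    (m : ℕ) (hm : 1 ≤ m) (ham : a m ≠ 0)
    (P : ℕ) (hPN : N₁ < P)
    (hP : ∀ n : ℕ, P < n →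
      3 * C ^ 2 * ((m : ℝ) ^ ((k : ℝ) / 2 - 1 / 5)) ^ 2 * (n : ℝ) ^ ((k : ℝ) / 2 - 1 / 5)
        < (n : ℝ) ^ ((k : ℝ) - 1))
    :
    ∀ p : ℕ, p.Prime → P < p → ∀ n : ℕ, 1 ≤ n →
      a (m * p ^ n) = b p * a (m * p ^ (n - 1)) -
        χ p * (p : ℤ) ^ (k - 1) * (if 2 ≤ n then a (m * p ^ (n - 2)) else 0) :=
  coefficient_recursion_at_large_primes_general k hk a b χ hχ C hC ha hb N₁ hASD m hm P hPN hP
end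

section
/- Assume additionally that b(1) = 1 and that for every prime p and every e ≥ 1 one has b(p^{e+1}) = b(p)·b(p^e) − χ(p)·p^{k−1}·b(p^{e−1}). Let p₁, …, p_r (r ≥ 1) be distinct primes, each greater than P(m) and coprime to m, and let e₁, …, e_r ≥ 0 be integers. Then a(m)·a(m·p₁^{e₁}⋯p_r^{e_r}) = a(m·p₁^{e₁}⋯p_{r−1}^{e_{r−1}})·a(m·p_r^{e_r}). -/
/-!
Let `B` be the multiplicative extension of `b` from prime powers. For `n` built from the
admissible primes we show `a (m * n) = a m * B n` by strong induction on `n`. Peeling one factor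
`p` off `n` and using the induction hypothesis on `n / p` and `n / p²`, the Atkin–Swinnerton-Dyer
congruence together with the Hecke recursion for `b` shows that `p ^ ((k - 1) ord_p n)` divides
`a (m * n) - a m * B n`; hence so does `n ^ (k - 1)`. The coefficient bounds make this difference
smaller than `n ^ (k - 1)` in absolute value (this is what the choice of `P` is for), so it
vanishes. The theorem follows from multiplicativity of `B`.
-/

open Finset

def multiplicativeExtension (b : ℕ → ℤ) (n : ℕ) : ℤ :=
  n.factorization.prod fun p e => b (p ^ e)

namespace multiplicativeExtension

@[simp] lemma one (b : ℕ → ℤ) : multiplicativeExtension b 1 = 1 := by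
  simp [multiplicativeExtension]

lemma mul_of_coprime (b : ℕ → ℤ) {m n : ℕ} (h : m.Coprime n) :
    multiplicativeExtension b (m * n) =
      multiplicativeExtension b m * multiplicativeExtension b n := by
  rw [multiplicativeExtension, Nat.factorization_mul_of_coprime h,
    Finsupp.prod_add_index_of_disjoint (by simpa using h.disjoint_primeFactors)]
  rfl

lemma prime_pow {b : ℕ → ℤ} (hb1 : b 1 = 1) {p : ℕ} (hp : p.Prime) (e : ℕ) :
    multiplicativeExtension b (p ^ e) = b (p ^ e) := by
  rw [multiplicativeExtension, hp.factorization_pow, Finsupp.prod_single_index (by simpa using hb1)]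

lemma prime_pow_mul {b : ℕ → ℤ} (hb1 : b 1 = 1) {p u : ℕ} (hp : p.Prime) (hpu : ¬p ∣ u)
    (e : ℕ) :
    multiplicativeExtension b (p ^ e * u) = b (p ^ e) * multiplicativeExtension b u := by
  rw [mul_of_coprime b (((Nat.Prime.coprime_iff_not_dvd hp).2 hpu).pow_left e), prime_pow hb1 hp]

end multiplicativeExtension

lemma Nat.rpow_eq_prod_primeFactors {n : ℕ} (hn : n ≠ 0) (s : ℝ) :
    (n : ℝ) ^ s = ∏ p ∈ n.primeFactors, ((p ^ n.factorization p : ℕ) : ℝ) ^ s := by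
  rw [Real.finsetProd_rpow _ _ (fun _ _ => by positivity), ← Nat.cast_prod,
    ← Nat.prod_factorization_eq_prod_primeFactors, Nat.prod_factorization_pow_eq_self hn]

lemma abs_multiplicativeExtension_le {b : ℕ → ℤ} {C σ : ℝ}
    (hb : ∀ n : ℕ, 1 ≤ n → |(b n : ℝ)| ≤ C * (n : ℝ) ^ σ) {n : ℕ} (hn : n ≠ 0) :
    |(multiplicativeExtension b n : ℝ)| ≤ C ^ n.primeFactors.card * (n : ℝ) ^ σ := by
  rw [multiplicativeExtension, Nat.prod_factorization_eq_prod_primeFactors, Int.cast_prod,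
    abs_prod, Nat.rpow_eq_prod_primeFactors hn, ← prod_const, ← prod_mul_distrib]
  exact prod_le_prod (fun _ _ => abs_nonneg _) fun p hp =>
    hb _ (Nat.one_le_iff_ne_zero.2 (pow_ne_zero _ (Nat.prime_of_mem_primeFactors hp).ne_zero))

lemma pow_card_primeFactors_mul_rpow_lt {K s t : ℝ} {P n : ℕ} (hK : 0 < K)
    (hP : ∀ q : ℕ, P < q → K * (q : ℝ) ^ s < (q : ℝ) ^ t) (hn0 : n ≠ 0) (hn1 : n ≠ 1)
    (hnP : ∀ p ∈ n.primeFactors, P < p) :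
    K ^ n.primeFactors.card * (n : ℝ) ^ s < (n : ℝ) ^ t := by
  rw [Nat.rpow_eq_prod_primeFactors hn0, Nat.rpow_eq_prod_primeFactors hn0, ← prod_const,
    ← prod_mul_distrib]
  refine prod_lt_prod_of_nonempty (fun p hp => ?_) (fun p hp => hP _ ?_)
    (Nat.nonempty_primeFactors.2 (by omega))
  · have := (Nat.prime_of_mem_primeFactors hp).pos
    positivity
  · exact (hnP p hp).trans_le (Nat.le_self_pow (Nat.Prime.factorization_pos_of_dvd
      (Nat.prime_of_mem_primeFactors hp) hn0 (Nat.dvd_of_mem_primeFactors hp)).ne' p)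

lemma mul_add_mul_mul_pow_le {C A : ℝ} (hC : 1 ≤ C) (hA : 1 ≤ A) {w : ℕ} (hw : w ≠ 0) :
    C * A + C * A * C ^ w ≤ (3 * C ^ 2 * A ^ 2) ^ w := by
  obtain ⟨v, rfl⟩ := Nat.exists_eq_succ_of_ne_zero hw
  set Y := C ^ 2 * A ^ 2
  have hY : 1 ≤ Y := one_le_mul_of_one_le_of_one_le (one_le_pow₀ hC) (one_le_pow₀ hA)
  have hCA : C * A ≤ Y := by nlinarith
  have hC2A : C ^ 2 * A ≤ Y := mul_le_mul_of_nonneg_left (by nlinarith) (by positivity)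
  have hCv : C ^ v ≤ (3 * Y) ^ v := pow_le_pow_left₀ (by positivity) (by nlinarith) v
  have hYv : 1 ≤ (3 * Y) ^ v := one_le_pow₀ (by linarith)
  calc C * A + C * A * C ^ (v + 1) = C * A + C ^ 2 * A * C ^ v := by ring
    _ ≤ Y * (3 * Y) ^ v + Y * (3 * Y) ^ v :=
      add_le_add (hCA.trans (le_mul_of_one_le_right (by positivity) hYv))
        (mul_le_mul hC2A hCv (by positivity) (by positivity))
    _ ≤ 3 * Y * (3 * Y) ^ v := by nlinarith [(by positivity : 0 ≤ Y * (3 * Y) ^ v)]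
    _ = (3 * C ^ 2 * A ^ 2) ^ (v + 1) := by simp only [Y]; ring

lemma abs_sub_mul_multiplicativeExtension_lt {a b : ℕ → ℤ} {C σ t : ℝ} {m P n : ℕ}
    (hσ : 0 ≤ σ) (hC : 1 ≤ C) (hm : 1 ≤ m)
    (ha : ∀ n : ℕ, 1 ≤ n → |(a n : ℝ)| < C * (n : ℝ) ^ σ)
    (hb : ∀ n : ℕ, 1 ≤ n → |(b n : ℝ)| < C * (n : ℝ) ^ σ)
    (hP : ∀ n : ℕ, P < n → 3 * C ^ 2 * ((m : ℝ) ^ σ) ^ 2 * (n : ℝ) ^ σ < (n : ℝ) ^ t)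
    (hn0 : n ≠ 0) (hn1 : n ≠ 1) (hnP : ∀ p ∈ n.primeFactors, P < p) :
    |(a (m * n) : ℝ) - a m * multiplicativeExtension b n| < (n : ℝ) ^ t := by
  set A := (m : ℝ) ^ σ
  set w := n.primeFactors.card
  have hA : 1 ≤ A := Real.one_le_rpow (by exact_mod_cast hm) hσ
  have hw : w ≠ 0 := (card_pos.2 (Nat.nonempty_primeFactors.2 (by omega))).ne'
  have hamn : |(a (m * n) : ℝ)| < C * A * (n : ℝ) ^ σ := by
    have := ha (m * n) (Nat.one_le_iff_ne_zero.2 (by positivity))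
    rwa [Nat.cast_mul, Real.mul_rpow (by positivity) (by positivity), ← mul_assoc] at this
  have hB := abs_multiplicativeExtension_le (fun n hn => (hb n hn).le) hn0
  calc |(a (m * n) : ℝ) - a m * multiplicativeExtension b n|
      ≤ |(a (m * n) : ℝ)| + |(a m : ℝ)| * |(multiplicativeExtension b n : ℝ)| := by
        rw [← abs_mul]; exact abs_sub _ _
    _ < C * A * (n : ℝ) ^ σ + C * A * (C ^ w * (n : ℝ) ^ σ) :=
        add_lt_add_of_lt_of_le hamn (mul_le_mul (ha m hm).le hB (abs_nonneg _) (by positivity))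
    _ = (C * A + C * A * C ^ w) * (n : ℝ) ^ σ := by ring
    _ ≤ (3 * C ^ 2 * A ^ 2) ^ w * (n : ℝ) ^ σ :=
        mul_le_mul_of_nonneg_right (mul_add_mul_mul_pow_le hC hA hw) (by positivity)
    _ < (n : ℝ) ^ t := pow_card_primeFactors_mul_rpow_lt (by positivity) hP hn0 hn1 hnP

lemma Int.natCast_pow_dvd_of_forall_primeFactors {n c : ℕ} {D : ℤ} (hn : n ≠ 0)
    (h : ∀ p ∈ n.primeFactors, (p : ℤ) ^ (c * n.factorization p) ∣ D) :
    (n : ℤ) ^ c ∣ D := by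
  have hprod : (n : ℤ) ^ c = ∏ p ∈ n.primeFactors, (p : ℤ) ^ (c * n.factorization p) := by
    conv_lhs => rw [← Nat.prod_factorization_pow_eq_self hn,
      Nat.prod_factorization_eq_prod_primeFactors]
    push_cast
    rw [← prod_pow]
    simp_rw [← pow_mul, mul_comm]
  rw [hprod]
  refine prod_dvd_of_coprime (fun p hp q hq hpq => ?_) h
  exact (Nat.isCoprime_iff_coprime.2 ((Nat.coprime_primes (Nat.prime_of_mem_primeFactors hp)
    (Nat.prime_of_mem_primeFactors hq)).2 hpq)).pow

lemma prime_pow_dvd_sub_mul_multiplicativeExtension {k m p n : ℕ} {a b χ : ℕ → ℤ}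
    (hm : 1 ≤ m) (hp : p.Prime) (hpm : ¬p ∣ m)
    (hASD : ∀ N : ℕ, 1 ≤ N → ((p : ℤ) ^ ((k - 1) * (1 + padicValNat p N))) ∣
      (a (N * p) - b p * a N + χ p * (p : ℤ) ^ (k - 1) * (if p ∣ N then a (N / p) else 0)))
    (hb1 : b 1 = 1)
    (hbrec : ∀ e : ℕ, 1 ≤ e →
      b (p ^ (e + 1)) = b p * b (p ^ e) - χ p * (p : ℤ) ^ (k - 1) * b (p ^ (e - 1)))
    (hn : n ≠ 0) (hpn : p ∣ n)
    (ih : ∀ d, d ∣ n → d < n → a (m * d) = a m * multiplicativeExtension b d) :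
    (p : ℤ) ^ ((k - 1) * n.factorization p) ∣
      a (m * n) - a m * multiplicativeExtension b n := by
  have := Fact.mk hp
  obtain ⟨e, u, hpu, rfl⟩ := Nat.exists_eq_pow_mul_and_not_dvd hn p hp.ne_one
  have hu : u ≠ 0 := by rintro rfl; simp at hpu
  have hpj (j : ℕ) : p ^ j ≠ 0 := pow_ne_zero j hp.ne_zero
  obtain ⟨j, rfl⟩ : ∃ j, e = j + 1 := by
    rcases e with _ | j
    · simp [hpu] at hpn
    · exact ⟨j, rfl⟩
  have ih' : ∀ i ≤ j + 1, i < j + 1 →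
      a (m * (p ^ i * u)) = a m * (b (p ^ i) * multiplicativeExtension b u) := fun i hi hlt => by
    rw [ih _ (mul_dvd_mul_right (pow_dvd_pow p hi) u)
      (Nat.mul_lt_mul_of_pos_right (Nat.pow_lt_pow_right hp.one_lt hlt) (Nat.pos_of_ne_zero hu)),
      multiplicativeExtension.prime_pow_mul hb1 hp hpu]
  have hfact : (p ^ (j + 1) * u).factorization p = 1 + j := by
    simp [Nat.factorization_mul (hpj _) hu, hp.factorization_pow,
      Nat.factorization_eq_zero_of_not_dvd hpu, add_comm]
  have hval : padicValNat p (m * (p ^ j * u)) = j := by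
    rw [padicValNat.mul (by omega) (mul_ne_zero (hpj j) hu), padicValNat.mul (hpj j) hu,
      padicValNat.prime_pow, padicValNat.eq_zero_of_not_dvd hpm,
      padicValNat.eq_zero_of_not_dvd hpu]
    simp
  have h := hASD (m * (p ^ j * u))
    (Nat.one_le_iff_ne_zero.2 (mul_ne_zero (by omega) (mul_ne_zero (hpj j) hu)))
  rw [hval, show m * (p ^ j * u) * p = m * (p ^ (j + 1) * u) by ring,
    ih' j (by omega) (by omega)] at h
  rw [hfact, multiplicativeExtension.prime_pow_mul hb1 hp hpu]
  -- the two sides differ by `a m * multiplicativeExtension b u` times the Hecke relation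
  -- for `b (p ^ (j + 1))`
  convert h using 1
  rcases j with _ | i
  · have : ¬p ∣ m * (p ^ 0 * u) := by simpa [hp.dvd_mul, hpm] using hpu
    rw [if_neg this]
    simp only [zero_add, pow_zero, pow_one, hb1]
    ring
  · have hdiv : m * (p ^ (i + 1) * u) / p = m * (p ^ i * u) :=
      Nat.div_eq_of_eq_mul_left hp.pos (by ring)
    rw [if_pos ⟨m * p ^ i * u, by ring⟩, hdiv, ih' i (by omega) (by omega),
      hbrec (i + 1) (by omega)]
    simp only [Nat.add_sub_cancel]
    ring

theorem coeff_mul_eq_mul_multiplicativeExtension {k : ℕ} {a b χ : ℕ → ℤ} {C σ : ℝ}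
    {m P : ℕ}
    (hk : 1 ≤ k) (hσ : 0 ≤ σ) (hC : 1 ≤ C)
    (ha : ∀ n : ℕ, 1 ≤ n → |(a n : ℝ)| < C * (n : ℝ) ^ σ)
    (hb : ∀ n : ℕ, 1 ≤ n → |(b n : ℝ)| < C * (n : ℝ) ^ σ)
    (hASD : ∀ p : ℕ, p.Prime → P < p → ∀ N : ℕ, 1 ≤ N →
      ((p : ℤ) ^ ((k - 1) * (1 + padicValNat p N))) ∣
        (a (N * p) - b p * a N + χ p * (p : ℤ) ^ (k - 1) * (if p ∣ N then a (N / p) else 0)))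
    (hm : 1 ≤ m)
    (hP : ∀ n : ℕ, P < n →
      3 * C ^ 2 * ((m : ℝ) ^ σ) ^ 2 * (n : ℝ) ^ σ < (n : ℝ) ^ ((k : ℝ) - 1))
    (hb1 : b 1 = 1)
    (hbrec : ∀ p : ℕ, p.Prime → ∀ e : ℕ, 1 ≤ e →
      b (p ^ (e + 1)) = b p * b (p ^ e) - χ p * (p : ℤ) ^ (k - 1) * b (p ^ (e - 1)))
    (n : ℕ) (hn : n ≠ 0) (hnP : ∀ p ∈ n.primeFactors, P < p ∧ p.Coprime m) :
    a (m * n) = a m * multiplicativeExtension b n := by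
  induction n using Nat.strong_induction_on with
  | _ n ih =>
  rcases eq_or_ne n 1 with rfl | hn1
  · simp
  have hdvd : (n : ℤ) ^ (k - 1) ∣ a (m * n) - a m * multiplicativeExtension b n := by
    refine Int.natCast_pow_dvd_of_forall_primeFactors hn fun p hp => ?_
    have hpp := Nat.prime_of_mem_primeFactors hp
    exact prime_pow_dvd_sub_mul_multiplicativeExtension hm hpp
      ((Nat.Prime.coprime_iff_not_dvd hpp).1 (hnP p hp).2) (hASD p hpp (hnP p hp).1) hb1
      (hbrec p hpp) hn (Nat.dvd_of_mem_primeFactors hp) fun d hd hlt =>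
        ih d hlt (ne_zero_of_dvd_ne_zero hn hd) fun q hq =>
          hnP q (Nat.primeFactors_mono hd hn hq)
  have hlt : |a (m * n) - a m * multiplicativeExtension b n| < (n : ℤ) ^ (k - 1) := by
    have := abs_sub_mul_multiplicativeExtension_lt hσ hC hm ha hb hP hn hn1
      fun p hp => (hnP p hp).1
    rw [← Nat.cast_one, ← Nat.cast_sub hk, Real.rpow_natCast] at this
    exact_mod_cast this
  exact sub_eq_zero.1 (Int.eq_zero_of_abs_lt_dvd hdvd hlt)

lemma Nat.eq_of_mem_primeFactors_prod_pow {ι : Type*} {s : Finset ι} {p e : ι → ℕ}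
    (hp : ∀ i, (p i).Prime) {q : ℕ} (hq : q ∈ (∏ i ∈ s, p i ^ e i).primeFactors) :
    ∃ i ∈ s, q = p i := by
  have hqp := Nat.prime_of_mem_primeFactors hq
  obtain ⟨i, hi, hdvd⟩ := hqp.prime.exists_mem_finset_dvd (Nat.dvd_of_mem_primeFactors hq)
  exact ⟨i, hi, (Nat.prime_dvd_prime_iff_eq hqp (hp i)).1 (hqp.dvd_of_dvd_pow hdvd)⟩

theorem coefficient_product_relation_general
    (k : ℕ) (hk : 2 ≤ k)
    (a b χ : ℕ → ℤ)
    (C : ℝ) (hC : 1 < C)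
    (ha : ∀ n : ℕ, 1 ≤ n → |((a n : ℝ))| < C * (n : ℝ) ^ ((k : ℝ) / 2 - 1 / 5))
    (hb : ∀ n : ℕ, 1 ≤ n → |((b n : ℝ))| < C * (n : ℝ) ^ ((k : ℝ) / 2 - 1 / 5))
    (N₁ : ℕ)
    (hASD : ∀ p : ℕ, p.Prime → N₁ < p → ∀ n : ℕ, 1 ≤ n →
      ((p : ℤ) ^ ((k - 1) * (1 + padicValNat p n))) ∣
        (a (n * p) - b p * a n +
          χ p * (p : ℤ) ^ (k - 1) * (if p ∣ n then a (n / p) else 0)))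
    (m : ℕ) (hm : 1 ≤ m)
    (P : ℕ) (hPN : N₁ < P)
    (hP : ∀ n : ℕ, P < n →
      3 * C ^ 2 * ((m : ℝ) ^ ((k : ℝ) / 2 - 1 / 5)) ^ 2 * (n : ℝ) ^ ((k : ℝ) / 2 - 1 / 5)
        < (n : ℝ) ^ ((k : ℝ) - 1))
    (hb1 : b 1 = 1)
    (hbrec : ∀ p : ℕ, p.Prime → ∀ e : ℕ, 1 ≤ e →
      b (p ^ (e + 1)) = b p * b (p ^ e) - χ p * (p : ℤ) ^ (k - 1) * b (p ^ (e - 1)))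
    (r : ℕ) (p e : Fin (r + 1) → ℕ)
    (hpinj : Function.Injective p)
    (hpprime : ∀ i, (p i).Prime)
    (hpgt : ∀ i, P < p i)
    (hpcop : ∀ i, Nat.Coprime (p i) m) :
    a m * a (m * ∏ i, p i ^ e i) =
      a (m * ∏ i : Fin r, p i.castSucc ^ e i.castSucc) *
        a (m * p (Fin.last r) ^ e (Fin.last r)) := by
  have hσ : (0 : ℝ) ≤ (k : ℝ) / 2 - 1 / 5 := by
    have : (2 : ℝ) ≤ k := by exact_mod_cast hk
    linarith
  have key := coeff_mul_eq_mul_multiplicativeExtension (by omega) hσ hC.le ha hb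
    (fun q hq hqP => hASD q hq (hPN.trans hqP)) hm hP hb1 hbrec
  set n₁ := ∏ i : Fin r, p i.castSucc ^ e i.castSucc
  set n₂ := p (Fin.last r) ^ e (Fin.last r)
  have hsplit : ∏ i, p i ^ e i = n₁ * n₂ := Fin.prod_univ_castSucc _
  have hne : ∏ i, p i ^ e i ≠ 0 :=
    prod_ne_zero_iff.2 fun i _ => pow_ne_zero _ (hpprime i).ne_zero
  have hgood : ∀ d, d ∣ ∏ i, p i ^ e i → ∀ q ∈ d.primeFactors, P < q ∧ q.Coprime m :=
    fun d hd q hq => by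
      obtain ⟨i, -, rfl⟩ :=
        Nat.eq_of_mem_primeFactors_prod_pow hpprime (Nat.primeFactors_mono hd hne hq)
      exact ⟨hpgt i, hpcop i⟩
  have hcop : n₁.Coprime n₂ := Nat.Coprime.prod_left fun i _ => Nat.Coprime.pow _ _
    ((Nat.coprime_primes (hpprime _) (hpprime _)).2 (hpinj.ne (Fin.castSucc_lt_last i).ne))
  rw [hsplit] at hne hgood ⊢
  rw [key _ hne (hgood _ dvd_rfl), key n₁ (left_ne_zero_of_mul hne) (hgood _ (dvd_mul_right _ _)),
    key n₂ (right_ne_zero_of_mul hne) (hgood _ (dvd_mul_left _ _)),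
    multiplicativeExtension.mul_of_coprime b hcop]
  ring

theorem coefficient_product_relation
    (k : ℕ) (hk : 2 ≤ k)
    (a b χ : ℕ → ℤ)
    (hχ : ∀ n : ℕ, χ n = -1 ∨ χ n = 0 ∨ χ n = 1)
    (C : ℝ) (hC : 1 < C)
    (ha : ∀ n : ℕ, 1 ≤ n → |((a n : ℝ))| < C * (n : ℝ) ^ ((k : ℝ) / 2 - 1 / 5))
    (hb : ∀ n : ℕ, 1 ≤ n → |((b n : ℝ))| < C * (n : ℝ) ^ ((k : ℝ) / 2 - 1 / 5))
    (N₁ : ℕ)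
    (hASD : ∀ p : ℕ, p.Prime → N₁ < p → ∀ n : ℕ, 1 ≤ n →
      ((p : ℤ) ^ ((k - 1) * (1 + padicValNat p n))) ∣
        (a (n * p) - b p * a n +
          χ p * (p : ℤ) ^ (k - 1) * (if p ∣ n then a (n / p) else 0)))
    (m : ℕ) (hm : 1 ≤ m) (ham : a m ≠ 0)
    (P : ℕ) (hPN : N₁ < P)
    (hP : ∀ n : ℕ, P < n →
      3 * C ^ 2 * ((m : ℝ) ^ ((k : ℝ) / 2 - 1 / 5)) ^ 2 * (n : ℝ) ^ ((k : ℝ) / 2 - 1 / 5)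
        < (n : ℝ) ^ ((k : ℝ) - 1))
    (hb1 : b 1 = 1)
    (hbrec : ∀ p : ℕ, p.Prime → ∀ e : ℕ, 1 ≤ e →
      b (p ^ (e + 1)) = b p * b (p ^ e) - χ p * (p : ℤ) ^ (k - 1) * b (p ^ (e - 1)))
    (r : ℕ) (p e : Fin (r + 1) → ℕ)
    (hpinj : Function.Injective p)
    (hpprime : ∀ i, (p i).Prime)
    (hpgt : ∀ i, P < p i)
    (hpcop : ∀ i, Nat.Coprime (p i) m) :
    a m * a (m * ∏ i, p i ^ e i) =
      a (m * ∏ i : Fin r, p i.castSucc ^ e i.castSucc) *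
        a (m * p (Fin.last r) ^ e (Fin.last r)) :=
  coefficient_product_relation_general k hk a b χ C hC ha hb N₁ hASD m hm P hPN hP hb1 hbrec r p e
    hpinj hpprime hpgt hpcop
end

section
/- Assume additionally that b(1) = 1, that b is multiplicative (b(MN) = b(M)b(N) for coprime positive integers M, N), and that for every prime p and every e ≥ 1 one has b(p^{e+1}) = b(p)·b(p^e) − χ(p)·p^{k−1}·b(p^{e−1}). Let p₁, …, p_r be distinct primes, each greater than P(m) and coprime to m, and let e₁, …, e_r ≥ 0 be integers. Then a(m·p₁^{e₁}⋯p_r^{e_r}) = a(m)·b(p₁^{e₁})⋯b(p_r^{e_r}) = a(m)·b(p₁^{e₁}⋯p_r^{e_r}). -/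
/-!
Write `N = ∏ pᵢ ^ eᵢ` and induct on `N` among the integers all of whose prime factors exceed
`P` and are prime to `m`. For a prime `q` with `q ^ e ∥ N`, the Atkin–Swinnerton-Dyer
congruence at `m N / q`, the induction hypothesis at `N / q` and `N / q²` and the Hecke
recursion for `b (q ^ e)` give `q ^ ((k - 1) e) ∣ a (m N) - a m * b N`, so `N ^ (k - 1)`
divides this difference. The growth bounds make it smaller than
`3 C² A(m)² N ^ (k/2 - 1/5) < N ^ (k - 1)` in absolute value, so it vanishes.
-/

theorem natCast_pow_dvd_of_forall_prime {n : ℕ} (hn : n ≠ 0) (t : ℕ) {x : ℤ}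
    (h : ∀ q : ℕ, q.Prime → (q : ℤ) ^ (t * n.factorization q) ∣ x) :
    (n : ℤ) ^ t ∣ x := by
  rw [← Nat.cast_pow, Int.natCast_dvd, Nat.dvd_iff_prime_pow_dvd_dvd]
  intro q j hq hqj
  have hj : j ≤ t * n.factorization q := by
    rwa [hq.pow_dvd_iff_le_factorization (pow_ne_zero t hn), Nat.factorization_pow,
      Finsupp.smul_apply, smul_eq_mul] at hqj
  exact Int.natCast_dvd.mp ((pow_dvd_pow (q : ℤ) hj).trans (h q hq))

section

variable {k : ℕ} {a b χ : ℕ → ℤ}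

theorem map_prod_of_pairwise_coprime (hb1 : b 1 = 1)
    (hbmul : ∀ M M' : ℕ, 0 < M → 0 < M' → Nat.Coprime M M' → b (M * M') = b M * b M')
    {ι : Type*} (f : ι → ℕ) (hf : ∀ i, 0 < f i) (s : Finset ι)
    (hs : (s : Set ι).Pairwise (Function.onFun Nat.Coprime f)) :
    b (∏ i ∈ s, f i) = ∏ i ∈ s, b (f i) := by
  classical
  induction s using Finset.induction_on with
  | empty => simpa using hb1
  | insert c s hc ih =>
    rw [Finset.coe_insert, Set.pairwise_insert] at hs
    rw [Finset.prod_insert hc, Finset.prod_insert hc, ← ih hs.1]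
    exact hbmul _ _ (hf c) (Finset.prod_pos fun i _ => hf i)
      (Nat.Coprime.prod_right fun j hj => (hs.2 j hj (by rintro rfl; exact hc hj)).1)

theorem abs_coeff_mul_sub_lt {C x : ℝ} (hC : 1 < C) (hx : 0 ≤ x)
    (ha : ∀ n : ℕ, 1 ≤ n → |(a n : ℝ)| < C * (n : ℝ) ^ x)
    (hb : ∀ n : ℕ, 1 ≤ n → |(b n : ℝ)| < C * (n : ℝ) ^ x)
    {m n : ℕ} (hm : 1 ≤ m) (hn : 1 ≤ n) :
    |(a (m * n) : ℝ) - a m * b n| < 3 * C ^ 2 * ((m : ℝ) ^ x) ^ 2 * (n : ℝ) ^ x := by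
  have hmx : 1 ≤ (m : ℝ) ^ x := Real.one_le_rpow (by exact_mod_cast hm) hx
  have hnx : 0 ≤ (n : ℝ) ^ x := by positivity
  have hamn : |(a (m * n) : ℝ)| < C * ((m : ℝ) ^ x * (n : ℝ) ^ x) := by
    simpa [Real.mul_rpow] using ha (m * n) (Nat.one_le_iff_ne_zero.mpr (by positivity))
  have hambn : |(a m : ℝ) * b n| < (C * (m : ℝ) ^ x) * (C * (n : ℝ) ^ x) := by
    rw [abs_mul]
    exact mul_lt_mul'' (ha m hm) (hb n hn) (abs_nonneg _) (abs_nonneg _)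
  calc |(a (m * n) : ℝ) - a m * b n|
      ≤ |(a (m * n) : ℝ)| + |(a m : ℝ) * b n| := abs_sub _ _
    _ < C * ((m : ℝ) ^ x * (n : ℝ) ^ x) + (C * (m : ℝ) ^ x) * (C * (n : ℝ) ^ x) := by
      gcongr
    _ ≤ 3 * C ^ 2 * ((m : ℝ) ^ x) ^ 2 * (n : ℝ) ^ x := by
      set y := C * (m : ℝ) ^ x
      have hCy : C ≤ y := le_mul_of_one_le_right (by linarith) hmx
      have hy : y ≤ y ^ 2 := by nlinarith
      nlinarith [mul_le_mul_of_nonneg_right hy hnx, mul_le_mul_of_nonneg_right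
        (mul_le_mul_of_nonneg_left hCy (by linarith : 0 ≤ y)) hnx]

theorem prime_pow_dvd_coeff_sub {p : ℕ} (hp : p.Prime)
    (hASD : ∀ n : ℕ, 1 ≤ n →
      ((p : ℤ) ^ ((k - 1) * (1 + padicValNat p n))) ∣
        (a (n * p) - b p * a n +
          χ p * (p : ℤ) ^ (k - 1) * (if p ∣ n then a (n / p) else 0)))
    (hb1 : b 1 = 1)
    (hbrec : ∀ e : ℕ, 1 ≤ e →
      b (p ^ (e + 1)) = b p * b (p ^ e) - χ p * (p : ℤ) ^ (k - 1) * b (p ^ (e - 1)))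
    {c : ℕ} (hc : 0 < c) (hpc : ¬ p ∣ c) (l : ℤ) {e : ℕ} (he : 1 ≤ e)
    (hlow : ∀ j < e, a (c * p ^ j) = l * b (p ^ j)) :
    (p : ℤ) ^ ((k - 1) * e) ∣ a (c * p ^ e) - l * b (p ^ e) := by
  have : Fact p.Prime := ⟨hp⟩
  obtain _ | _ | j := e
  · omega
  · have hac : a c = l := by simpa [hb1] using hlow 0 one_pos
    have h := hASD c hc
    rw [padicValNat.eq_zero_of_not_dvd hpc, if_neg hpc, hac] at h
    simpa [mul_comm (b p)] using h
  · have hval : padicValNat p (c * p ^ (j + 1)) = j + 1 := by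
      rw [padicValNat.mul hc.ne' (pow_ne_zero _ hp.ne_zero), padicValNat.prime_pow,
        padicValNat.eq_zero_of_not_dvd hpc, zero_add]
    have hdiv : c * p ^ (j + 1) / p = c * p ^ j := by
      rw [pow_succ, ← mul_assoc, Nat.mul_div_cancel _ hp.pos]
    have h := hASD (c * p ^ (j + 1)) (Nat.mul_pos hc (pow_pos hp.pos _))
    rw [hval, if_pos (dvd_mul_of_dvd_right (dvd_pow_self p j.succ_ne_zero) c), hdiv,
      mul_assoc, ← pow_succ, hlow (j + 1) (by omega), hlow j (by omega)] at h
    rw [show (k - 1) * (j + 2) = (k - 1) * (1 + (j + 1)) by ring, hbrec (j + 1) (by omega)]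
    convert h using 1
    simp only [add_tsub_cancel_right]
    ring

theorem ordProj_pow_dvd_coeff_sub {q : ℕ} (hq : q.Prime)
    (hASD : ∀ n : ℕ, 1 ≤ n →
      ((q : ℤ) ^ ((k - 1) * (1 + padicValNat q n))) ∣
        (a (n * q) - b q * a n +
          χ q * (q : ℤ) ^ (k - 1) * (if q ∣ n then a (n / q) else 0)))
    (hb1 : b 1 = 1)
    (hbrec : ∀ e : ℕ, 1 ≤ e →
      b (q ^ (e + 1)) = b q * b (q ^ e) - χ q * (q : ℤ) ^ (k - 1) * b (q ^ (e - 1)))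
    (hbmul : ∀ M M' : ℕ, 0 < M → 0 < M' → Nat.Coprime M M' → b (M * M') = b M * b M')
    {m n : ℕ} (hm : 0 < m) (hqm : ¬ q ∣ m) (hn : n ≠ 0) (hqn : q ∣ n)
    (ih : ∀ d, d ∣ n → d < n → a (m * d) = a m * b d) :
    (q : ℤ) ^ ((k - 1) * n.factorization q) ∣ a (m * n) - a m * b n := by
  set e := n.factorization q
  set u := ordCompl[q] n
  have hu : 0 < u := Nat.ordCompl_pos q hn
  have hqu : Nat.Coprime q u := Nat.coprime_ordCompl hq hn
  have hb_split : ∀ j, b (u * q ^ j) = b u * b (q ^ j) := fun j =>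
    hbmul _ _ hu (pow_pos hq.pos j) (hqu.symm.pow_right j)
  have hn_split : n = u * q ^ e := by
    rw [mul_comm]; exact (Nat.ordProj_mul_ordCompl_eq_self n q).symm
  have he : 1 ≤ e := (hq.dvd_iff_one_le_factorization hn).mp hqn
  have h := prime_pow_dvd_coeff_sub hq hASD hb1 hbrec (c := m * u) (by positivity)
    (by rw [hq.dvd_mul]; exact not_or_intro hqm (hq.coprime_iff_not_dvd.mp hqu)) (a m * b u) he
    (fun j hj => by
      have hlt : u * q ^ j < n := by
        rw [hn_split]; exact Nat.mul_lt_mul_of_pos_left (Nat.pow_lt_pow_right hq.one_lt hj) hu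
      rw [mul_assoc, ih _ (hn_split ▸ mul_dvd_mul_left u (pow_dvd_pow q hj.le)) hlt,
        hb_split, mul_assoc])
  rwa [mul_assoc, ← hn_split, mul_assoc, ← hb_split, ← hn_split] at h

theorem coeff_mul_eq_mul_of_forall_prime_dvd (hk : 1 ≤ k) {C x : ℝ} (hC : 1 < C) (hx : 0 ≤ x)
    (ha : ∀ n : ℕ, 1 ≤ n → |(a n : ℝ)| < C * (n : ℝ) ^ x)
    (hb : ∀ n : ℕ, 1 ≤ n → |(b n : ℝ)| < C * (n : ℝ) ^ x)
    {m P : ℕ} (hm : 1 ≤ m)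
    (hASD : ∀ p : ℕ, p.Prime → P < p → ∀ n : ℕ, 1 ≤ n →
      ((p : ℤ) ^ ((k - 1) * (1 + padicValNat p n))) ∣
        (a (n * p) - b p * a n +
          χ p * (p : ℤ) ^ (k - 1) * (if p ∣ n then a (n / p) else 0)))
    (hb1 : b 1 = 1)
    (hbrec : ∀ p : ℕ, p.Prime → ∀ e : ℕ, 1 ≤ e →
      b (p ^ (e + 1)) = b p * b (p ^ e) - χ p * (p : ℤ) ^ (k - 1) * b (p ^ (e - 1)))
    (hbmul : ∀ M M' : ℕ, 0 < M → 0 < M' → Nat.Coprime M M' → b (M * M') = b M * b M')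
    (hP : ∀ n : ℕ, P < n →
      3 * C ^ 2 * ((m : ℝ) ^ x) ^ 2 * (n : ℝ) ^ x < (n : ℝ) ^ ((k : ℝ) - 1))
    (n : ℕ) (hn : 0 < n) (hgood : ∀ q : ℕ, q.Prime → q ∣ n → P < q ∧ ¬ q ∣ m) :
    a (m * n) = a m * b n := by
  induction n using Nat.strong_induction_on with
  | _ n ih =>
  rcases eq_or_ne n 1 with rfl | hn1
  · simp [hb1]
  obtain ⟨q, hq, hqn⟩ := Nat.exists_prime_and_dvd hn1
  have hPn : P < n := (hgood q hq hqn).1.trans_le (Nat.le_of_dvd hn hqn)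
  have hdvd : (n : ℤ) ^ (k - 1) ∣ a (m * n) - a m * b n := by
    refine natCast_pow_dvd_of_forall_prime hn.ne' _ fun q hq => ?_
    by_cases hqn : q ∣ n
    · exact ordProj_pow_dvd_coeff_sub hq (hASD q hq (hgood q hq hqn).1) hb1 (hbrec q hq) hbmul
        hm (hgood q hq hqn).2 hn.ne' hqn fun d hd hdn => ih d hdn (Nat.pos_of_dvd_of_pos hd hn)
          fun q hq hqd => hgood q hq (hqd.trans hd)
    · simp [Nat.factorization_eq_zero_of_not_dvd hqn]
  have hlt : |a (m * n) - a m * b n| < (n : ℤ) ^ (k - 1) := by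
    have h := (abs_coeff_mul_sub_lt hC hx ha hb hm hn).trans (hP n hPn)
    rw [← Nat.cast_one, ← Nat.cast_sub hk, Real.rpow_natCast] at h
    exact_mod_cast h
  exact sub_eq_zero.mp (Int.eq_zero_of_abs_lt_dvd hdvd hlt)

end

theorem coefficients_agree_at_large_smooth_multiples_general
    (k : ℕ) (hk : 2 ≤ k)
    (a b χ : ℕ → ℤ)
    (C : ℝ) (hC : 1 < C)
    (ha : ∀ n : ℕ, 1 ≤ n → |((a n : ℝ))| < C * (n : ℝ) ^ ((k : ℝ) / 2 - 1 / 5))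
    (hb : ∀ n : ℕ, 1 ≤ n → |((b n : ℝ))| < C * (n : ℝ) ^ ((k : ℝ) / 2 - 1 / 5))
    (N₁ : ℕ)
    (hASD : ∀ p : ℕ, p.Prime → N₁ < p → ∀ n : ℕ, 1 ≤ n →
      ((p : ℤ) ^ ((k - 1) * (1 + padicValNat p n))) ∣
        (a (n * p) - b p * a n +
          χ p * (p : ℤ) ^ (k - 1) * (if p ∣ n then a (n / p) else 0)))
    (m : ℕ) (hm : 1 ≤ m)
    (P : ℕ) (hPN : N₁ < P)
    (hP : ∀ n : ℕ, P < n →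
      3 * C ^ 2 * ((m : ℝ) ^ ((k : ℝ) / 2 - 1 / 5)) ^ 2 * (n : ℝ) ^ ((k : ℝ) / 2 - 1 / 5)
        < (n : ℝ) ^ ((k : ℝ) - 1))
    (hb1 : b 1 = 1)
    (hbrec : ∀ p : ℕ, p.Prime → ∀ e : ℕ, 1 ≤ e →
      b (p ^ (e + 1)) = b p * b (p ^ e) - χ p * (p : ℤ) ^ (k - 1) * b (p ^ (e - 1)))
    (hbmul : ∀ M M' : ℕ, 0 < M → 0 < M' → Nat.Coprime M M' → b (M * M') = b M * b M')
    (r : ℕ) (p e : Fin r → ℕ)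
    (hpinj : Function.Injective p)
    (hpprime : ∀ i, (p i).Prime)
    (hpgt : ∀ i, P < p i)
    (hpcop : ∀ i, Nat.Coprime (p i) m) :
    a (m * ∏ i, p i ^ e i) = a m * ∏ i, b (p i ^ e i) ∧
      a (m * ∏ i, p i ^ e i) = a m * b (∏ i, p i ^ e i) := by
  have hx : 0 ≤ (k : ℝ) / 2 - 1 / 5 := by
    have : (2 : ℝ) ≤ k := by exact_mod_cast hk
    linarith
  have hgood : ∀ q : ℕ, q.Prime → q ∣ ∏ i, p i ^ e i → P < q ∧ ¬ q ∣ m := by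
    intro q hq hqN
    obtain ⟨i, -, hqi⟩ := hq.prime.exists_mem_finset_dvd hqN
    obtain rfl := (Nat.prime_dvd_prime_iff_eq hq (hpprime i)).mp (hq.dvd_of_dvd_pow hqi)
    exact ⟨hpgt i, (hpprime i).coprime_iff_not_dvd.mp (hpcop i)⟩
  have hmain := coeff_mul_eq_mul_of_forall_prime_dvd (by omega) hC hx ha hb hm
    (fun q hq hqP => hASD q hq (hPN.trans hqP)) hb1 hbrec hbmul hP _
    (Finset.prod_pos fun i _ => pow_pos (hpprime i).pos _) hgood
  have hprod : b (∏ i, p i ^ e i) = ∏ i, b (p i ^ e i) :=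
    map_prod_of_pairwise_coprime hb1 hbmul _ (fun i => pow_pos (hpprime i).pos _) _
      fun i _ j _ hij => Nat.Coprime.pow _ _
        ((Nat.coprime_primes (hpprime i) (hpprime j)).mpr (hpinj.ne hij))
  exact ⟨by rw [hmain, hprod], hmain⟩

theorem coefficients_agree_at_large_smooth_multiples
    (k : ℕ) (hk : 2 ≤ k)
    (a b χ : ℕ → ℤ)
    (hχ : ∀ n : ℕ, χ n = -1 ∨ χ n = 0 ∨ χ n = 1)
    (C : ℝ) (hC : 1 < C)
    (ha : ∀ n : ℕ, 1 ≤ n → |((a n : ℝ))| < C * (n : ℝ) ^ ((k : ℝ) / 2 - 1 / 5))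
    (hb : ∀ n : ℕ, 1 ≤ n → |((b n : ℝ))| < C * (n : ℝ) ^ ((k : ℝ) / 2 - 1 / 5))
    (N₁ : ℕ)
    (hASD : ∀ p : ℕ, p.Prime → N₁ < p → ∀ n : ℕ, 1 ≤ n →
      ((p : ℤ) ^ ((k - 1) * (1 + padicValNat p n))) ∣
        (a (n * p) - b p * a n +
          χ p * (p : ℤ) ^ (k - 1) * (if p ∣ n then a (n / p) else 0)))
    (m : ℕ) (hm : 1 ≤ m) (ham : a m ≠ 0)
    (P : ℕ) (hPN : N₁ < P)
    (hP : ∀ n : ℕ, P < n →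
      3 * C ^ 2 * ((m : ℝ) ^ ((k : ℝ) / 2 - 1 / 5)) ^ 2 * (n : ℝ) ^ ((k : ℝ) / 2 - 1 / 5)
        < (n : ℝ) ^ ((k : ℝ) - 1))
    (hb1 : b 1 = 1)
    (hbrec : ∀ p : ℕ, p.Prime → ∀ e : ℕ, 1 ≤ e →
      b (p ^ (e + 1)) = b p * b (p ^ e) - χ p * (p : ℤ) ^ (k - 1) * b (p ^ (e - 1)))
    (hbmul : ∀ M M' : ℕ, 0 < M → 0 < M' → Nat.Coprime M M' → b (M * M') = b M * b M')
    (r : ℕ) (p e : Fin r → ℕ)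
    (hpinj : Function.Injective p)
    (hpprime : ∀ i, (p i).Prime)
    (hpgt : ∀ i, P < p i)
    (hpcop : ∀ i, Nat.Coprime (p i) m) :
    a (m * ∏ i, p i ^ e i) = a m * ∏ i, b (p i ^ e i) ∧
      a (m * ∏ i, p i ^ e i) = a m * b (∏ i, p i ^ e i) :=
  coefficients_agree_at_large_smooth_multiples_general k hk a b χ C hC ha hb N₁ hASD m hm P hPN hP
    hb1 hbrec hbmul r p e hpinj hpprime hpgt hpcop
end

section
/- Assume additionally that b(1) = 1, that b is multiplicative (b(MN) = b(M)b(N) for coprime positive integers M, N), and that for every prime p and every e ≥ 1 one has b(p^{e+1}) = b(p)·b(p^e) − χ(p)·p^{k−1}·b(p^{e−1}). Then for every positive integer M all of whose prime factors are greater than P(m) and which is coprime to m, a(m·M) = a(m)·b(M). -/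
/-!
Induct on `M`. If `p ^ e` exactly divides `M = M' * p ^ e`, the Atkin–Swinnerton-Dyer congruence
at `n = m * M' * p ^ (e - 1)`, together with the induction hypothesis at `m * M' * p ^ (e - 1)` and
`m * M' * p ^ (e - 2)` and the Hecke recursion for `b`, gives
`p ^ ((k - 1) * e) ∣ a (m * M) - a m * b M`. Hence `M ^ (k - 1)` divides this difference, while the
growth bounds make its absolute value less than `3 C² A(m)² M ^ (k/2 - 1/5) < M ^ (k - 1)`.
-/

theorem Int.natCast_pow_dvd_of_forall_prime_pow_dvd {M r : ℕ} (hM : M ≠ 0) {D : ℤ}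
    (h : ∀ p, p.Prime → p ∣ M → (p : ℤ) ^ (r * M.factorization p) ∣ D) :
    (M : ℤ) ^ r ∣ D := by
  rw [← Int.natAbs_dvd_natAbs, Int.natAbs_pow, Int.natAbs_natCast, Nat.dvd_iff_prime_pow_dvd_dvd]
  intro p j hp hpj
  have hj : j ≤ r * M.factorization p := by
    simpa using (hp.pow_dvd_iff_le_factorization (pow_ne_zero r hM)).1 hpj
  by_cases hpM : p ∣ M
  · exact (pow_dvd_pow p hj).trans (by simpa using Int.natAbs_dvd_natAbs.2 (h p hp hpM))
  · simp only [Nat.factorization_eq_zero_of_not_dvd hpM, mul_zero, nonpos_iff_eq_zero] at hj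
    simp [hj]

theorem Int.eq_zero_of_natCast_pow_dvd_of_abs_lt_rpow {M k : ℕ} (hk : 1 ≤ k) {D : ℤ}
    (hdvd : (M : ℤ) ^ (k - 1) ∣ D) (hlt : |(D : ℝ)| < (M : ℝ) ^ ((k : ℝ) - 1)) : D = 0 := by
  refine Int.eq_zero_of_abs_lt_dvd hdvd ?_
  rw [← Nat.cast_one, ← Nat.cast_sub hk, Real.rpow_natCast] at hlt
  exact_mod_cast hlt

theorem abs_sub_mul_lt_of_abs_lt {C A B u v w : ℝ} (hC : 1 ≤ C) (hA : 1 ≤ A) (hB : 0 ≤ B)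
    (hu : |u| < C * (A * B)) (hv : |v| < C * A) (hw : |w| < C * B) :
    |u - v * w| < 3 * C ^ 2 * A ^ 2 * B := by
  have hvw : |v * w| < C * A * (C * B) := by
    rw [abs_mul]
    exact mul_lt_mul'' hv hw (abs_nonneg _) (abs_nonneg _)
  have hCA : C * A ≤ C ^ 2 * A ^ 2 := by
    nlinarith [one_le_mul_of_one_le_of_one_le hC hA]
  have hAA : A ≤ A ^ 2 := by nlinarith
  calc |u - v * w| ≤ |u| + |v * w| := abs_sub _ _
    _ < C * (A * B) + C * A * (C * B) := add_lt_add hu hvw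
    _ ≤ 3 * C ^ 2 * A ^ 2 * B := by
      nlinarith [mul_le_mul_of_nonneg_right hCA hB,
        mul_le_mul_of_nonneg_left hAA (by positivity : 0 ≤ C ^ 2 * B)]

def AtkinSwinnertonDyerAt (k : ℕ) (a b χ : ℕ → ℤ) (p : ℕ) : Prop :=
  ∀ n : ℕ, 1 ≤ n → (p : ℤ) ^ ((k - 1) * (1 + padicValNat p n)) ∣
    a (n * p) - b p * a n + χ p * (p : ℤ) ^ (k - 1) * (if p ∣ n then a (n / p) else 0)

def HeckeRecursionAt (k : ℕ) (b χ : ℕ → ℤ) (p : ℕ) : Prop :=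
  ∀ e : ℕ, 1 ≤ e → b (p ^ (e + 1)) = b p * b (p ^ e) - χ p * (p : ℤ) ^ (k - 1) * b (p ^ (e - 1))

section AtOnePrime

variable {k : ℕ} {a b χ : ℕ → ℤ} {p : ℕ}

theorem prime_pow_dvd_sub_of_forall_lt (hp : p.Prime) (hASD : AtkinSwinnertonDyerAt k a b χ p)
    (hb1 : b 1 = 1) (hbrec : HeckeRecursionAt k b χ p) {n₀ : ℕ} (hn₀ : 0 < n₀) (hpn₀ : ¬p ∣ n₀)
    (c : ℤ) {e : ℕ} (he : 1 ≤ e) (hbelow : ∀ j < e, a (n₀ * p ^ j) = c * b (p ^ j)) :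
    (p : ℤ) ^ ((k - 1) * e) ∣ a (n₀ * p ^ e) - c * b (p ^ e) := by
  have : Fact p.Prime := ⟨hp⟩
  obtain ⟨f, rfl⟩ := Nat.exists_eq_add_of_le' he
  have hval : padicValNat p (n₀ * p ^ f) = f := by
    rw [padicValNat.mul hn₀.ne' (pow_pos hp.pos f).ne', padicValNat.eq_zero_of_not_dvd hpn₀,
      padicValNat.prime_pow, zero_add]
  have key := hASD (n₀ * p ^ f) (Nat.mul_pos hn₀ (pow_pos hp.pos f))
  rw [hval, add_comm 1 f, mul_assoc, ← pow_succ, hbelow f (by omega)] at key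
  rcases f with _ | g
  · simpa [hpn₀, hb1, mul_comm c] using key
  · have hdiv : n₀ * p ^ (g + 1) / p = n₀ * p ^ g := by
      rw [pow_succ, ← mul_assoc, Nat.mul_div_cancel _ hp.pos]
    rw [if_pos (dvd_mul_of_dvd_right (dvd_pow_self p g.succ_ne_zero) _), hdiv,
      hbelow g (by omega)] at key
    rw [hbrec (g + 1) (by omega)]
    convert key using 1
    simp only [Nat.add_sub_cancel]
    ring

theorem prime_pow_factorization_dvd_sub (hp : p.Prime) (hASD : AtkinSwinnertonDyerAt k a b χ p)
    (hb1 : b 1 = 1) (hbrec : HeckeRecursionAt k b χ p)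
    (hbmul : ∀ M M' : ℕ, 0 < M → 0 < M' → Nat.Coprime M M' → b (M * M') = b M * b M')
    {m M : ℕ} (hm : 0 < m) (hM : 0 < M) (hpM : p ∣ M) (hpm : ¬p ∣ m)
    (hbelow : ∀ d, d ∣ M → d < M → a (m * d) = a m * b d) :
    (p : ℤ) ^ ((k - 1) * M.factorization p) ∣ a (m * M) - a m * b M := by
  set e := M.factorization p
  set M' := M / p ^ e
  have hMeq : M' * p ^ e = M := (mul_comm _ _).trans (Nat.ordProj_mul_ordCompl_eq_self M p)
  have hM' : 0 < M' := Nat.ordCompl_pos p hM.ne'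
  have hpM' : ¬p ∣ M' := Nat.not_dvd_ordCompl hp hM.ne'
  have hcop : ∀ j, Nat.Coprime M' (p ^ j) := fun j =>
    (Nat.coprime_comm.1 (hp.coprime_iff_not_dvd.2 hpM')).pow_right j
  have hbM : b M = b M' * b (p ^ e) := by
    rw [← hbmul _ _ hM' (pow_pos hp.pos e) (hcop e), hMeq]
  have key := prime_pow_dvd_sub_of_forall_lt hp hASD hb1 hbrec (Nat.mul_pos hm hM')
    (by rw [hp.dvd_mul]; exact not_or.2 ⟨hpm, hpM'⟩) (a m * b M')
    (hp.factorization_pos_of_dvd hM.ne' hpM) fun j hj => by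
      have hlt : M' * p ^ j < M :=
        hMeq ▸ Nat.mul_lt_mul_of_pos_left (Nat.pow_lt_pow_right hp.one_lt hj) hM'
      rw [mul_assoc, hbelow _ (hMeq ▸ mul_dvd_mul_left M' (pow_dvd_pow p hj.le)) hlt,
        hbmul _ _ hM' (pow_pos hp.pos j) (hcop j), mul_assoc]
  rwa [mul_assoc, hMeq, mul_assoc, ← hbM] at key

end AtOnePrime

theorem coefficients_agree_at_large_multiples_general
    (k : ℕ) (hk : 2 ≤ k)
    (a b χ : ℕ → ℤ)
    (C : ℝ) (hC : 1 < C)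
    (ha : ∀ n : ℕ, 1 ≤ n → |((a n : ℝ))| < C * (n : ℝ) ^ ((k : ℝ) / 2 - 1 / 5))
    (hb : ∀ n : ℕ, 1 ≤ n → |((b n : ℝ))| < C * (n : ℝ) ^ ((k : ℝ) / 2 - 1 / 5))
    (N₁ : ℕ)
    (hASD : ∀ p : ℕ, p.Prime → N₁ < p → ∀ n : ℕ, 1 ≤ n →
      ((p : ℤ) ^ ((k - 1) * (1 + padicValNat p n))) ∣
        (a (n * p) - b p * a n +
          χ p * (p : ℤ) ^ (k - 1) * (if p ∣ n then a (n / p) else 0)))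
    (m : ℕ) (hm : 1 ≤ m)
    (P : ℕ) (hPN : N₁ < P)
    (hP : ∀ n : ℕ, P < n →
      3 * C ^ 2 * ((m : ℝ) ^ ((k : ℝ) / 2 - 1 / 5)) ^ 2 * (n : ℝ) ^ ((k : ℝ) / 2 - 1 / 5)
        < (n : ℝ) ^ ((k : ℝ) - 1))
    (hb1 : b 1 = 1)
    (hbrec : ∀ p : ℕ, p.Prime → ∀ e : ℕ, 1 ≤ e →
      b (p ^ (e + 1)) = b p * b (p ^ e) - χ p * (p : ℤ) ^ (k - 1) * b (p ^ (e - 1)))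
    (hbmul : ∀ M M' : ℕ, 0 < M → 0 < M' → Nat.Coprime M M' → b (M * M') = b M * b M')
    (M : ℕ) (hM : 0 < M)
    (hMfac : ∀ q : ℕ, q.Prime → q ∣ M → P < q)
    (hMcop : Nat.Coprime M m) :
    a (m * M) = a m * b M := by
  induction M using Nat.strong_induction_on with
  | _ M IH =>
  obtain rfl | hM1 := (Nat.one_le_iff_ne_zero.2 hM.ne').eq_or_lt
  · simp [hb1]
  have hbelow : ∀ d, d ∣ M → d < M → a (m * d) = a m * b d := fun d hd hdM =>
    IH d hdM (Nat.pos_of_dvd_of_pos hd hM) (fun q hq hqd => hMfac q hq (hqd.trans hd))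
      (hMcop.coprime_dvd_left hd)
  have hdvd : (M : ℤ) ^ (k - 1) ∣ a (m * M) - a m * b M :=
    Int.natCast_pow_dvd_of_forall_prime_pow_dvd hM.ne' fun p hp hpM =>
      prime_pow_factorization_dvd_sub hp (hASD p hp (hPN.trans (hMfac p hp hpM))) hb1
        (hbrec p hp) hbmul hm hM hpM
        (hp.coprime_iff_not_dvd.1 (hMcop.coprime_dvd_left hpM)) hbelow
  have hPM : P < M := by
    obtain ⟨q, hq, hqM⟩ := Nat.exists_prime_and_dvd hM1.ne'
    exact (hMfac q hq hqM).trans_le (Nat.le_of_dvd hM hqM)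
  have hα : (0 : ℝ) ≤ (k : ℝ) / 2 - 1 / 5 := by
    have : (2 : ℝ) ≤ k := by exact_mod_cast hk
    linarith
  have hsize : |((a (m * M) - a m * b M : ℤ) : ℝ)| < (M : ℝ) ^ ((k : ℝ) - 1) := by
    refine lt_trans ?_ (hP M hPM)
    push_cast
    refine abs_sub_mul_lt_of_abs_lt hC.le (Real.one_le_rpow (by exact_mod_cast hm) hα)
      (Real.rpow_nonneg M.cast_nonneg _) ?_ (ha m hm) (hb M hM)
    rw [← Real.mul_rpow m.cast_nonneg M.cast_nonneg]
    exact_mod_cast ha (m * M) (Nat.mul_pos hm hM)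
  exact sub_eq_zero.1 (Int.eq_zero_of_natCast_pow_dvd_of_abs_lt_rpow (by omega) hdvd hsize)

theorem coefficients_agree_at_large_multiples
    (k : ℕ) (hk : 2 ≤ k)
    (a b χ : ℕ → ℤ)
    (hχ : ∀ n : ℕ, χ n = -1 ∨ χ n = 0 ∨ χ n = 1)
    (C : ℝ) (hC : 1 < C)
    (ha : ∀ n : ℕ, 1 ≤ n → |((a n : ℝ))| < C * (n : ℝ) ^ ((k : ℝ) / 2 - 1 / 5))
    (hb : ∀ n : ℕ, 1 ≤ n → |((b n : ℝ))| < C * (n : ℝ) ^ ((k : ℝ) / 2 - 1 / 5))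
    (N₁ : ℕ)
    (hASD : ∀ p : ℕ, p.Prime → N₁ < p → ∀ n : ℕ, 1 ≤ n →
      ((p : ℤ) ^ ((k - 1) * (1 + padicValNat p n))) ∣
        (a (n * p) - b p * a n +
          χ p * (p : ℤ) ^ (k - 1) * (if p ∣ n then a (n / p) else 0)))
    (m : ℕ) (hm : 1 ≤ m) (ham : a m ≠ 0)
    (P : ℕ) (hPN : N₁ < P)
    (hP : ∀ n : ℕ, P < n →
      3 * C ^ 2 * ((m : ℝ) ^ ((k : ℝ) / 2 - 1 / 5)) ^ 2 * (n : ℝ) ^ ((k : ℝ) / 2 - 1 / 5)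
        < (n : ℝ) ^ ((k : ℝ) - 1))
    (hb1 : b 1 = 1)
    (hbrec : ∀ p : ℕ, p.Prime → ∀ e : ℕ, 1 ≤ e →
      b (p ^ (e + 1)) = b p * b (p ^ e) - χ p * (p : ℤ) ^ (k - 1) * b (p ^ (e - 1)))
    (hbmul : ∀ M M' : ℕ, 0 < M → 0 < M' → Nat.Coprime M M' → b (M * M') = b M * b M')
    (M : ℕ) (hM : 0 < M)
    (hMfac : ∀ q : ℕ, q.Prime → q ∣ M → P < q)
    (hMcop : Nat.Coprime M m) :
    a (m * M) = a m * b M :=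
  coefficients_agree_at_large_multiples_general k hk a b χ C hC ha hb N₁ hASD m hm P hPN hP hb1
    hbrec hbmul M hM hMfac hMcop
end

section
/- Let Γ ≤ Δ be subgroups of SL₂(ℤ) with Γ of finite index in SL₂(ℤ). Let Γᶜ and Δᶜ denote the congruence closures of Γ and Δ respectively. Then the set product Δ·Γᶜ = {g₁g₂ : g₁ ∈ Δ, g₂ ∈ Γᶜ} equals Δᶜ, and consequently [Δᶜ : Δ] = [Γᶜ : Γᶜ ∩ Δ]. -/
open scoped MatrixGroups ModularForm Real Manifold Topology Pointwise
open Complex CongruenceSubgroup UpperHalfPlane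

noncomputable section

/-- `Γc` is the congruence closure of `Γ`: the smallest congruence subgroup of `SL(2, ℤ)`
containing `Γ`. -/
def IsCongruenceClosure (Γ Γc : Subgroup SL(2, ℤ)) : Prop :=
  Γ ≤ Γc ∧ IsCongruenceSubgroup Γc ∧
    ∀ H : Subgroup SL(2, ℤ), Γ ≤ H → IsCongruenceSubgroup H → Γc ≤ H

/-- `T` is a set of right coset representatives of `B` in the set `D`: `T ⊆ D` and every
`g ∈ D` lies in the right coset `B·t` of exactly one `t ∈ T`. -/
def IsRightTransversal {A : Type*} [Group A] (B : Subgroup A) (D T : Set A) : Prop :=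
  T ⊆ D ∧ ∀ g ∈ D, ∃! t, t ∈ T ∧ g * t⁻¹ ∈ B

/-- `f` is a cusp form of weight `k` for `Γ`: holomorphic on `ℍ`, weight-`k` slash invariant
under `Γ`, and vanishing at all the cusps. -/
def IsCuspFormWt (k : ℤ) (Γ : Subgroup SL(2, ℤ)) (f : ℍ → ℂ) : Prop :=
  MDifferentiable 𝓘(ℂ) 𝓘(ℂ) f ∧ (∀ γ ∈ Γ, f ∣[k] γ = f) ∧
    ∀ A : SL(2, ℤ), IsZeroAtImInfty (f ∣[k] A)

/-- `f ∈ S_k^{prim}(Γ)`: the trace of `f` from `Γ` to the congruence closure `Γᶜ` of `Γ`,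
namely `∑_{γ ∈ T} f ∣[k] γ` over a set `T` of right coset representatives of `Γ` in `Γᶜ`,
vanishes. -/
def IsPrimNoncong (k : ℤ) (Γ : Subgroup SL(2, ℤ)) (f : ℍ → ℂ) : Prop :=
  ∀ Γc : Subgroup SL(2, ℤ), IsCongruenceClosure Γ Γc →
    ∀ T : Finset SL(2, ℤ), IsRightTransversal Γ (Γc : Set SL(2, ℤ)) (T : Set SL(2, ℤ)) →
      ∑ γ ∈ T, f ∣[k] γ = 0

/-! If `Γ(N) ≤ Γᶜ`, then `Δ Γ(N)` is a congruence subgroup (as `Γ(N)` is normal) containing `Δ`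
and contained in `Δᶜ`, so `Δᶜ = Δ Γ(N) ⊆ Δ Γᶜ ⊆ Δᶜ`. Taking inverses, `Δᶜ = Γᶜ Δ`, so every
left coset of `Δ` in `Δᶜ` has a representative in `Γᶜ`, which gives the index identity. -/

theorem Subgroup.relIndex_eq_relIndex_of_mul_eq {G : Type*} [Group G] {D K C : Subgroup G}
    (hKC : K ≤ C) (hDK : (D : Set G) * K = C) : D.relIndex C = D.relIndex K := by
  have hKD : (K : Set G) * D = C := by
    simpa [mul_inv_rev] using congrArg (·⁻¹) hDK
  have hsurj : Function.Surjective (quotientSubgroupOfEmbeddingOfLE D hKC) := by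
    intro x
    induction x using QuotientGroup.induction_on with | H c => ?_
    obtain ⟨c, hc⟩ := c
    obtain ⟨k, hk, d, hd, rfl⟩ : c ∈ (K : Set G) * D := hKD ▸ hc
    refine ⟨QuotientGroup.mk ⟨k, hk⟩, ?_⟩
    rw [quotientSubgroupOfEmbeddingOfLE_apply_mk, QuotientGroup.eq, Subgroup.mem_subgroupOf]
    simpa using hd
  exact (Nat.card_congr
    (Equiv.ofBijective _ ⟨(quotientSubgroupOfEmbeddingOfLE D hKC).injective, hsurj⟩)).symm

namespace IsCongruenceClosure

variable {Γ Δ Γc Δc : Subgroup SL(2, ℤ)}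

theorem mono (hΓΔ : Γ ≤ Δ) (hΓc : IsCongruenceClosure Γ Γc) (hΔc : IsCongruenceClosure Δ Δc) :
    Γc ≤ Δc :=
  hΓc.2.2 Δc (hΓΔ.trans hΔc.1) hΔc.2.1

theorem eq_sup_Gamma (hΔc : IsCongruenceClosure Δ Δc) {N : ℕ} (hN : N ≠ 0) (hNΔc : Γ(N) ≤ Δc) :
    Δc = Δ ⊔ Γ(N) :=
  le_antisymm (hΔc.2.2 _ le_sup_left ⟨N, hN, le_sup_right⟩) (sup_le hΔc.1 hNΔc)

theorem coe_eq_mul_Gamma (hΔc : IsCongruenceClosure Δ Δc) {N : ℕ} (hN : N ≠ 0)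
    (hNΔc : Γ(N) ≤ Δc) : (Δc : Set SL(2, ℤ)) = Δ * Γ(N) := by
  have := Gamma_normal N
  rw [hΔc.eq_sup_Gamma hN hNΔc, Subgroup.mul_normal]

end IsCongruenceClosure

theorem congruence_closure_product_formula_general
    (Γ Δ : Subgroup SL(2, ℤ)) (hΓΔ : Γ ≤ Δ)
    (Γc Δc : Subgroup SL(2, ℤ))
    (hΓc : IsCongruenceClosure Γ Γc) (hΔc : IsCongruenceClosure Δ Δc) :
    (Δ : Set SL(2, ℤ)) * (Γc : Set SL(2, ℤ)) = (Δc : Set SL(2, ℤ)) ∧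
      Δ.relIndex Δc = Δ.relIndex Γc := by
  obtain ⟨N, hN, hNΓc⟩ := hΓc.2.1
  have hΓcΔc : Γc ≤ Δc := hΓc.mono hΓΔ hΔc
  have hprod : (Δ : Set SL(2, ℤ)) * Γc = Δc := by
    refine subset_antisymm (Set.mul_subset_iff.2 fun d hd g hg ↦ ?_) ?_
    · exact Δc.mul_mem (hΔc.1 hd) (hΓcΔc hg)
    · rw [hΔc.coe_eq_mul_Gamma hN (hNΓc.trans hΓcΔc)]
      exact Set.mul_subset_mul_left hNΓc
  exact ⟨hprod, Subgroup.relIndex_eq_relIndex_of_mul_eq hΓcΔc hprod⟩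

theorem congruence_closure_product_formula
    (Γ Δ : Subgroup SL(2, ℤ)) (hΓΔ : Γ ≤ Δ) (hΓ : Γ.index ≠ 0)
    (Γc Δc : Subgroup SL(2, ℤ))
    (hΓc : IsCongruenceClosure Γ Γc) (hΔc : IsCongruenceClosure Δ Δc) :
    (Δ : Set SL(2, ℤ)) * (Γc : Set SL(2, ℤ)) = (Δc : Set SL(2, ℤ)) ∧
      Δ.relIndex Δc = Δ.relIndex Γc :=
  congruence_closure_product_formula_general Γ Δ hΓΔ Γc Δc hΓc hΔc
end
end

section
/- Let h be a cusp form of weight k for a finite-index subgroup Γ of SL₂(ℤ) that is primitive noncongruence for Γ, and let G be any finite-index subgroup of Γ. Then h is a cusp form of weight k for G and is primitive noncongruence for G. -/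
open scoped MatrixGroups ModularForm Real Manifold Topology Pointwise
open Complex CongruenceSubgroup UpperHalfPlane

noncomputable section

/-!
Let `Gᶜ` be the congruence closure of `G ≤ Γ`. It contains some `Γ(N)`, so `Gᶜ ≤ G·Γ(N)`, and
`Γ ⊔ Gᶜ = Γ·Gᶜ` is the congruence closure of `Γ`. Hence `g ↦ Γg` identifies `(Γ ∩ Gᶜ)\Gᶜ` with
`Γ\(Γ ⊔ Gᶜ)`, and each `(Γ ∩ Gᶜ)`-coset in `Gᶜ` contains exactly `[Γ ∩ Gᶜ : G]` elements of a right
transversal `T` of `G` in `Gᶜ`. Since `h` is `Γ`-invariant, the trace of `h` over `T` is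
`[Γ ∩ Gᶜ : G]` times its trace from `Γ` to `Γ ⊔ Gᶜ`, which vanishes.
-/

open Finset

section Transversal

variable {A : Type*} [Group A]

def rightCosetRep (Γ : Subgroup A) (g : A) : A :=
  (Quotient.mk (QuotientGroup.rightRel Γ) g).out

theorem rightCosetRep_mul_inv_mem (Γ : Subgroup A) (g : A) : rightCosetRep Γ g * g⁻¹ ∈ Γ :=
  QuotientGroup.rightRel_apply.mp ((QuotientGroup.rightRel Γ).iseqv.symm (Quotient.mk_out g))

theorem rightCosetRep_eq_iff {Γ : Subgroup A} {g g' : A} :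
    rightCosetRep Γ g = rightCosetRep Γ g' ↔ g * g'⁻¹ ∈ Γ := by
  rw [rightCosetRep, rightCosetRep, eq_comm, Quotient.out_inj, Quotient.eq,
    QuotientGroup.rightRel_apply]

theorem rightCosetRep_rightCosetRep (Γ : Subgroup A) (g : A) :
    rightCosetRep Γ (rightCosetRep Γ g) = rightCosetRep Γ g :=
  rightCosetRep_eq_iff.mpr (rightCosetRep_mul_inv_mem Γ g)

theorem apply_rightCosetRep {M : Type*} {Γ : Subgroup A} {F : A → M}
    (hF : ∀ γ ∈ Γ, ∀ a, F (γ * a) = F a) (g : A) : F (rightCosetRep Γ g) = F g := by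
  simpa using hF _ (rightCosetRep_mul_inv_mem Γ g) g

namespace IsRightTransversal

variable {B D : Subgroup A} {T : Finset A}

theorem eq_of_mul_inv_mem (hT : IsRightTransversal B D T) {t t' : A} (ht : t ∈ T)
    (ht' : t' ∈ T) (htt' : t * t'⁻¹ ∈ B) : t = t' :=
  (hT.2 t (hT.1 ht)).unique ⟨ht, by simp⟩ ⟨ht', htt'⟩

theorem card_filter_mul_inv_mem (hT : IsRightTransversal B D T) {C : Subgroup A}
    [DecidablePred (· ∈ C)] (hBC : B ≤ C) (hCD : C ≤ D) {g : A} (hg : g ∈ D) :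
    #{t ∈ T | t * g⁻¹ ∈ C} = B.relIndex C := by
  let f : {t // t ∈ T.filter (· * g⁻¹ ∈ C)} → C ⧸ B.subgroupOf C := fun t =>
    QuotientGroup.mk ⟨g * t.1⁻¹, by simpa using C.inv_mem (mem_filter.mp t.2).2⟩
  have hf : Function.Bijective f := by
    constructor
    · rintro ⟨t, ht⟩ ⟨t', ht'⟩ hftt'
      have htt' : t * t'⁻¹ ∈ B := by
        simpa [f, QuotientGroup.eq, Subgroup.mem_subgroupOf, mul_assoc] using hftt'
      exact Subtype.ext (hT.eq_of_mul_inv_mem (mem_filter.mp ht).1 (mem_filter.mp ht').1 htt')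
    · rintro ⟨c, hc⟩
      obtain ⟨t, ⟨ht, hct⟩, -⟩ := hT.2 (c⁻¹ * g) (D.mul_mem (D.inv_mem (hCD hc)) hg)
      have hgt : g * t⁻¹ ∈ C := by
        simpa [mul_assoc] using C.mul_mem hc (hBC hct)
      refine ⟨⟨t, mem_filter.mpr ⟨ht, by simpa using C.inv_mem hgt⟩⟩, ?_⟩
      show QuotientGroup.mk _ = QuotientGroup.mk _
      rw [QuotientGroup.eq]
      simpa [Subgroup.mem_subgroupOf, mul_assoc] using B.inv_mem hct
  exact (Nat.card_eq_finsetCard _).symm.trans (Nat.card_eq_of_bijective f hf)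

theorem image_rightCosetRep [DecidableEq A] (hT : IsRightTransversal B D T) {Γ E : Subgroup A}
    (hBΓ : B ≤ Γ) (hE : (E : Set A) = Γ * D) :
    IsRightTransversal Γ E (T.image (rightCosetRep Γ) : Set A) := by
  constructor
  · intro s hs
    obtain ⟨t, ht, rfl⟩ := mem_image.mp hs
    rw [hE]
    exact ⟨_, rightCosetRep_mul_inv_mem Γ t, t, hT.1 ht, by group⟩
  · intro g hg
    rw [hE] at hg
    obtain ⟨a, ha, b, hb, rfl⟩ := hg
    obtain ⟨t, ⟨ht, hbt⟩, -⟩ := hT.2 b hb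
    have hab : a * b * (rightCosetRep Γ t)⁻¹ ∈ Γ := by
      have hsplit : a * b * (rightCosetRep Γ t)⁻¹ =
          a * (b * t⁻¹) * (rightCosetRep Γ t * t⁻¹)⁻¹ := by group
      rw [hsplit]
      exact mul_mem (mul_mem ha (hBΓ hbt)) (inv_mem (rightCosetRep_mul_inv_mem Γ t))
    refine ⟨rightCosetRep Γ t, ⟨mem_image_of_mem _ ht, hab⟩, ?_⟩
    rintro s ⟨hs, hab'⟩
    obtain ⟨t', -, rfl⟩ := mem_image.mp hs
    rw [← rightCosetRep_rightCosetRep Γ t', ← rightCosetRep_rightCosetRep Γ t,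
      rightCosetRep_eq_iff]
    have hsplit : rightCosetRep Γ t' * (rightCosetRep Γ t)⁻¹ =
        (a * b * (rightCosetRep Γ t')⁻¹)⁻¹ * (a * b * (rightCosetRep Γ t)⁻¹) := by group
    rw [hsplit]
    exact mul_mem (inv_mem hab') hab

theorem sum_eq_relIndex_smul_sum_image {M : Type*} [AddCommMonoid M] [DecidableEq A]
    (hT : IsRightTransversal B D T) {Γ : Subgroup A} (hBΓ : B ≤ Γ) (hBD : B ≤ D) {F : A → M}
    (hF : ∀ γ ∈ Γ, ∀ a, F (γ * a) = F a) :
    ∑ t ∈ T, F t = B.relIndex (Γ ⊓ D) • ∑ s ∈ T.image (rightCosetRep Γ), F s := by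
  classical
  rw [smul_sum]
  refine (sum_image' F fun t₀ ht₀ => ?_).symm
  have hfiber : {t ∈ T | rightCosetRep Γ t = rightCosetRep Γ t₀} =
      {t ∈ T | t * t₀⁻¹ ∈ Γ ⊓ D} := by
    refine filter_congr fun t ht => ?_
    rw [rightCosetRep_eq_iff, Subgroup.mem_inf, iff_self_and]
    exact fun _ => mul_mem (hT.1 ht) (inv_mem (hT.1 ht₀))
  have hconst : ∀ t ∈ {t ∈ T | rightCosetRep Γ t = rightCosetRep Γ t₀},
      F t = F (rightCosetRep Γ t₀) := by
    intro t ht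
    rw [← (mem_filter.mp ht).2, apply_rightCosetRep hF]
  rw [sum_congr rfl hconst, sum_const, hfiber,
    hT.card_filter_mul_inv_mem (le_inf hBΓ hBD) inf_le_right (hT.1 ht₀)]

end IsRightTransversal

end Transversal

theorem IsCuspFormWt.mono {k : ℤ} {Γ G : Subgroup SL(2, ℤ)} {f : ℍ → ℂ}
    (hf : IsCuspFormWt k Γ f) (hGΓ : G ≤ Γ) : IsCuspFormWt k G f :=
  ⟨hf.1, fun γ hγ => hf.2.1 γ (hGΓ hγ), hf.2.2⟩

namespace IsCongruenceClosure

variable {G Γ Gc : Subgroup SL(2, ℤ)}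

theorem sup (hGc : IsCongruenceClosure G Gc) (hGΓ : G ≤ Γ) :
    IsCongruenceClosure Γ (Γ ⊔ Gc) :=
  ⟨le_sup_left, isCongruenceSubgroup_trans _ _ le_sup_right hGc.2.1,
    fun H hΓH hH => sup_le hΓH (hGc.2.2 H (hGΓ.trans hΓH) hH)⟩

theorem coe_sup_eq_mul (hGc : IsCongruenceClosure G Gc) (hGΓ : G ≤ Γ) :
    ((Γ ⊔ Gc : Subgroup SL(2, ℤ)) : Set SL(2, ℤ)) = Γ * Gc := by
  obtain ⟨N, hN, hNGc⟩ := hGc.2.1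
  have : (Γ(N)).Normal := Gamma_normal N
  have hGc_le : Gc ≤ Γ ⊔ Γ(N) :=
    (hGc.2.2 _ le_sup_left ⟨N, hN, le_sup_right⟩).trans (sup_le_sup_right hGΓ _)
  refine subset_antisymm ?_ ?_
  · calc ((Γ ⊔ Gc : Subgroup SL(2, ℤ)) : Set SL(2, ℤ))
        ⊆ (Γ ⊔ Γ(N) : Subgroup SL(2, ℤ)) := sup_le le_sup_left hGc_le
      _ = Γ * Γ(N) := Subgroup.mul_normal _ _
      _ ⊆ Γ * Gc := Set.mul_subset_mul_left hNGc
  · rintro _ ⟨a, ha, b, hb, rfl⟩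
    exact Subgroup.mul_mem_sup ha hb

end IsCongruenceClosure

theorem primitive_noncongruence_descends_to_finite_index_subgroups_general
    (k : ℤ) (Γ : Subgroup SL(2, ℤ))
    (h : ℍ → ℂ) (hcusp : IsCuspFormWt k Γ h) (hprim : IsPrimNoncong k Γ h)
    (G : Subgroup SL(2, ℤ)) (hGΓ : G ≤ Γ) :
    IsCuspFormWt k G h ∧ IsPrimNoncong k G h := by
  refine ⟨hcusp.mono hGΓ, fun Gc hGc T hT => ?_⟩
  have hslash : ∀ γ ∈ Γ, ∀ a : SL(2, ℤ), h ∣[k] (γ * a) = h ∣[k] a := fun γ hγ a => by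
    rw [SlashAction.slash_mul, hcusp.2.1 γ hγ]
  rw [hT.sum_eq_relIndex_smul_sum_image hGΓ hGc.1 hslash,
    hprim _ (hGc.sup hGΓ) _ (hT.image_rightCosetRep hGΓ (hGc.coe_sup_eq_mul hGΓ)), smul_zero]

theorem primitive_noncongruence_descends_to_finite_index_subgroups
    (k : ℤ) (Γ : Subgroup SL(2, ℤ)) (hΓ : Γ.index ≠ 0)
    (h : ℍ → ℂ) (hcusp : IsCuspFormWt k Γ h) (hprim : IsPrimNoncong k Γ h)
    (G : Subgroup SL(2, ℤ)) (hGΓ : G ≤ Γ) (hGfin : G.relIndex Γ ≠ 0) :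
    IsCuspFormWt k G h ∧ IsPrimNoncong k G h :=
  primitive_noncongruence_descends_to_finite_index_subgroups_general k Γ h hcusp hprim G hGΓ
end
end

section
/- Let G be a finite-index subgroup of SL₂(ℤ) with congruence closure Gᶜ, and let γ ∈ GL₂(ℚ) with positive determinant satisfy γGγ⁻¹ = G. Assume (as holds for any γ ∈ GL₂(ℚ)) that γ⁻¹Gᶜγ ∩ SL₂(ℤ) contains a congruence subgroup and that γGᶜγ⁻¹ ∩ SL₂(ℤ) contains a congruence subgroup. Then γGᶜγ⁻¹ = Gᶜ, i.e., the congruence closure Gᶜ is also invariant under conjugation by γ. -/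
open scoped MatrixGroups ModularForm Real Manifold Topology Pointwise
open Complex CongruenceSubgroup UpperHalfPlane

noncomputable section

/-- The natural embedding of `SL(2, ℤ)` into `GL (Fin 2) ℚ`. -/
def toGLQ : SL(2, ℤ) →* GL (Fin 2) ℚ :=
  Matrix.SpecialLinearGroup.toGL.comp (Matrix.SpecialLinearGroup.map (Int.castRingHom ℚ))

/-- The image in `GL (Fin 2) ℚ` of the conjugate `γ G γ⁻¹` of a subgroup `G` of `SL(2, ℤ)`
by the element `γ ∈ GL (Fin 2) ℚ`. -/
def conjQ (γ : GL (Fin 2) ℚ) (G : Subgroup SL(2, ℤ)) : Subgroup (GL (Fin 2) ℚ) :=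
  (G.map toGLQ).map (MulAut.conj γ).toMonoidHom

/-- The subgroup `γ G γ⁻¹ ∩ SL(2, ℤ)` of `SL(2, ℤ)`. -/
def conjSL (γ : GL (Fin 2) ℚ) (G : Subgroup SL(2, ℤ)) : Subgroup SL(2, ℤ) :=
  (conjQ γ G).comap toGLQ

/-! Since `G ≤ γ Gᶜ γ⁻¹ ∩ SL(2, ℤ)` and the latter is a congruence subgroup, minimality of
the congruence closure gives `Gᶜ ≤ γ Gᶜ γ⁻¹`. The same argument for `γ⁻¹`, which also
normalizes `G`, gives the reverse inclusion. -/

theorem Subgroup.map_conj_inv_map_conj {A : Type*} [Group A] (a : A) (X : Subgroup A) :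
    (X.map (MulAut.conj a).toMonoidHom).map (MulAut.conj a⁻¹).toMonoidHom = X := by
  rw [Subgroup.map_map]
  convert Subgroup.map_id X using 2
  ext g
  simp [mul_assoc]

theorem conjQ_mono (γ : GL (Fin 2) ℚ) {G H : Subgroup SL(2, ℤ)} (h : G ≤ H) :
    conjQ γ G ≤ conjQ γ H :=
  Subgroup.map_mono (Subgroup.map_mono h)

theorem conjQ_inv_eq_of_conjQ_eq {γ : GL (Fin 2) ℚ} {G : Subgroup SL(2, ℤ)}
    (h : conjQ γ G = G.map toGLQ) : conjQ γ⁻¹ G = G.map toGLQ := by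
  have := Subgroup.map_conj_inv_map_conj γ (G.map toGLQ)
  rwa [← conjQ, h] at this

theorem isCongruenceSubgroup_conjSL {γ : GL (Fin 2) ℚ} {G : Subgroup SL(2, ℤ)}
    (h : ∃ H : Subgroup SL(2, ℤ), IsCongruenceSubgroup H ∧ H.map toGLQ ≤ conjQ γ G) :
    IsCongruenceSubgroup (conjSL γ G) := by
  obtain ⟨H, hH, hle⟩ := h
  exact isCongruenceSubgroup_trans H _ (Subgroup.map_le_iff_le_comap.mp hle) hH

theorem IsCongruenceClosure.map_le_conjQ {G Gc : Subgroup SL(2, ℤ)} {γ : GL (Fin 2) ℚ}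
    (hGc : IsCongruenceClosure G Gc) (hconj : conjQ γ G = G.map toGLQ)
    (h : ∃ H : Subgroup SL(2, ℤ), IsCongruenceSubgroup H ∧ H.map toGLQ ≤ conjQ γ Gc) :
    Gc.map toGLQ ≤ conjQ γ Gc := by
  have hG : G ≤ conjSL γ Gc := by
    rw [conjSL, ← Subgroup.map_le_iff_le_comap, ← hconj]
    exact conjQ_mono γ hGc.1
  exact Subgroup.map_le_iff_le_comap.mpr (hGc.2.2 _ hG (isCongruenceSubgroup_conjSL h))

theorem congruence_closure_invariant_under_conjugation_general
    (G Gc : Subgroup SL(2, ℤ))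
    (γ : GL (Fin 2) ℚ)
    (hconj : conjQ γ G = G.map toGLQ)
    (hGc : IsCongruenceClosure G Gc)
    (h1 : ∃ H : Subgroup SL(2, ℤ), IsCongruenceSubgroup H ∧ H.map toGLQ ≤ conjQ γ⁻¹ Gc)
    (h2 : ∃ H : Subgroup SL(2, ℤ), IsCongruenceSubgroup H ∧ H.map toGLQ ≤ conjQ γ Gc) :
    conjQ γ Gc = Gc.map toGLQ := by
  refine le_antisymm ?_ (hGc.map_le_conjQ hconj h2)
  calc conjQ γ Gc
      ≤ (conjQ γ⁻¹ Gc).map (MulAut.conj γ).toMonoidHom :=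
        Subgroup.map_mono (hGc.map_le_conjQ (conjQ_inv_eq_of_conjQ_eq hconj) h1)
    _ = Gc.map toGLQ := by
        rw [conjQ]
        simpa only [inv_inv] using Subgroup.map_conj_inv_map_conj γ⁻¹ (Gc.map toGLQ)

theorem congruence_closure_invariant_under_conjugation
    (G Gc : Subgroup SL(2, ℤ)) (hG : G.index ≠ 0)
    (γ : GL (Fin 2) ℚ) (hdet : 0 < ((γ : Matrix (Fin 2) (Fin 2) ℚ)).det)
    (hconj : conjQ γ G = G.map toGLQ)
    (hGc : IsCongruenceClosure G Gc)
    (h1 : ∃ H : Subgroup SL(2, ℤ), IsCongruenceSubgroup H ∧ H.map toGLQ ≤ conjQ γ⁻¹ Gc)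
    (h2 : ∃ H : Subgroup SL(2, ℤ), IsCongruenceSubgroup H ∧ H.map toGLQ ≤ conjQ γ Gc) :
    conjQ γ Gc = Gc.map toGLQ :=
  congruence_closure_invariant_under_conjugation_general G Gc γ hconj hGc h1 h2
end
end
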